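/- arXiv:1701.04177 — 8 statements merged into one kernel-verified Lean document; each statement's English description precedes it below -/
import Mathlib

section
/- Corollary 1 (Z-Bias with binary instrument and binary confounder, no additive interaction). In the binary parametric setup, assume: (a) no additive interaction: p11 − p10 − p01 + p00 = 0; (b) monotonicity: p11 ≥ max(p10, p01), min(p10, p01) ≥ p00, and m_1(1) ≥ m_1(0), m_0(1) ≥ m_0(0). Then ACE_1^adj ≥ ACE_unadj ≥ ACE_1^true, ACE_0^adj ≥ ACE_unadj ≥ ACE_0^true, and ACE_adj ≥ ACE_unadj ≥ ACE_true. -/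
/-!
Everything reduces to one fact about a binary covariate `X` and a binary treatment `A`: when
`P(A = 1 | X = x)` and `g(x)` are both nondecreasing in `x`, then
`E[g(X) | A = 0] ≤ E[g(X)] ≤ E[g(X) | A = 1]`. Since `Z` and `U` are independent, this applies to
the confounder `U` with `g = m_a`, which gives the bounds against the true effects. It also applies
to the instrument `Z`, listed in decreasing order so that `P(A = 0 | Z)` increases, with `g = μ_a`;
without additive interaction `μ_a(z)` is nonincreasing in `z`, because
`p₁₀ p₀₁ - p₁₁ p₀₀ = (1 - p₀₁)(1 - p₁₀) - (1 - p₁₁)(1 - p₀₀) = (p₁₀ - p₀₀)(p₀₁ - p₀₀)`.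
This gives the bounds against the adjusted effects.
-/

section Mean₂

variable {K : Type*} [Field K]

def mean₂ (a₀ a₁ x₀ x₁ : K) : K := (a₀ * x₀ + a₁ * x₁) / (a₀ + a₁)

theorem mean₂_of_add_eq_one {a₀ a₁ : K} (h : a₀ + a₁ = 1) (x₀ x₁ : K) :
    mean₂ a₀ a₁ x₀ x₁ = a₀ * x₀ + a₁ * x₁ := by
  rw [mean₂, h, div_one]

variable [LinearOrder K] [IsStrictOrderedRing K]

theorem mul_add_one_sub_mul_pos {t x y : K} (ht₀ : 0 ≤ t) (ht₁ : t ≤ 1) (hx : 0 < x) (hy : 0 < y) :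
    0 < t * x + (1 - t) * y :=
  (lt_min hx hy).trans_le (Convex.min_le_combo x y ht₀ (sub_nonneg.2 ht₁) (add_sub_cancel _ _))

theorem mean₂_le_mean₂ {a₀ a₁ b₀ b₁ x₀ x₁ : K} (ha : 0 < a₀ + a₁) (hb : 0 < b₀ + b₁)
    (hab : a₁ * b₀ ≤ a₀ * b₁) (hx : x₀ ≤ x₁) : mean₂ a₀ a₁ x₀ x₁ ≤ mean₂ b₀ b₁ x₀ x₁ := by
  rw [mean₂, mean₂, div_le_div_iff₀ ha hb]
  nlinarith [mul_nonneg (sub_nonneg.2 hab) (sub_nonneg.2 hx)]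

theorem mean₂_mul_one_sub_le_mean₂ {w₀ w₁ e₀ e₁ x₀ x₁ : K} (hw₀ : 0 ≤ w₀) (hw₁ : 0 ≤ w₁)
    (he : 0 < w₀ * (1 - e₀) + w₁ * (1 - e₁)) (hw : 0 < w₀ + w₁) (he₀₁ : e₀ ≤ e₁)
    (hx : x₀ ≤ x₁) : mean₂ (w₀ * (1 - e₀)) (w₁ * (1 - e₁)) x₀ x₁ ≤ mean₂ w₀ w₁ x₀ x₁ :=
  mean₂_le_mean₂ he hw (by nlinarith [mul_le_mul_of_nonneg_left he₀₁ (mul_nonneg hw₀ hw₁)]) hx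

theorem mean₂_le_mean₂_mul {w₀ w₁ e₀ e₁ x₀ x₁ : K} (hw₀ : 0 ≤ w₀) (hw₁ : 0 ≤ w₁)
    (hw : 0 < w₀ + w₁) (he : 0 < w₀ * e₀ + w₁ * e₁) (he₀₁ : e₀ ≤ e₁) (hx : x₀ ≤ x₁) :
    mean₂ w₀ w₁ x₀ x₁ ≤ mean₂ (w₀ * e₀) (w₁ * e₁) x₀ x₁ :=
  mean₂_le_mean₂ hw he (by nlinarith [mul_le_mul_of_nonneg_left he₀₁ (mul_nonneg hw₀ hw₁)]) hx

end Mean₂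

noncomputable section

/-- `p = P(Z = 1)`, `π = P(U = 1)`, `pzu = P(A = 1 | Z = z, U = u)`, `mau = m_a(u)`. -/
structure BinaryModel where
  (p π p11 p10 p01 p00 m11 m10 m01 m00 : ℝ)

namespace BinaryModel

variable (M : BinaryModel)

def prop : Bool → Bool → ℝ
  | true, true => M.p11
  | true, false => M.p10
  | false, true => M.p01
  | false, false => M.p00

def treatProb : ℝ :=
  M.p * M.π * M.p11 + M.p * (1 - M.π) * M.p10 + (1 - M.p) * M.π * M.p01
    + (1 - M.p) * (1 - M.π) * M.p00

def treatGivenU (u : Bool) : ℝ := M.p * M.prop true u + (1 - M.p) * M.prop false u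

def treatGivenZ (z : Bool) : ℝ := M.π * M.prop z true + (1 - M.π) * M.prop z false

def controlGivenZ (z : Bool) : ℝ :=
  M.π * (1 - M.prop z true) + (1 - M.π) * (1 - M.prop z false)

def μ₁ (z : Bool) : ℝ :=
  (M.π * M.prop z true * M.m11 + (1 - M.π) * M.prop z false * M.m10) / M.treatGivenZ z

def μ₀ (z : Bool) : ℝ :=
  (M.π * (1 - M.prop z true) * M.m01 + (1 - M.π) * (1 - M.prop z false) * M.m00)
    / M.controlGivenZ z

def obsMean1 : ℝ :=
  (M.p * M.π * M.p11 * M.m11 + M.p * (1 - M.π) * M.p10 * M.m10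
    + (1 - M.p) * M.π * M.p01 * M.m11 + (1 - M.p) * (1 - M.π) * M.p00 * M.m10) / M.treatProb

def obsMean0 : ℝ :=
  (M.p * M.π * (1 - M.p11) * M.m01 + M.p * (1 - M.π) * (1 - M.p10) * M.m00
    + (1 - M.p) * M.π * (1 - M.p01) * M.m01 + (1 - M.p) * (1 - M.π) * (1 - M.p00) * M.m00)
    / (1 - M.treatProb)

/-- `E(Y(0) | A = 1)`. -/
def cfMean1 : ℝ :=
  (M.p * M.π * M.p11 * M.m01 + M.p * (1 - M.π) * M.p10 * M.m00
    + (1 - M.p) * M.π * M.p01 * M.m01 + (1 - M.p) * (1 - M.π) * M.p00 * M.m00) / M.treatProb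

/-- `E(Y(1) | A = 0)`. -/
def cfMean0 : ℝ :=
  (M.p * M.π * (1 - M.p11) * M.m11 + M.p * (1 - M.π) * (1 - M.p10) * M.m10
    + (1 - M.p) * M.π * (1 - M.p01) * M.m11 + (1 - M.p) * (1 - M.π) * (1 - M.p00) * M.m10)
    / (1 - M.treatProb)

def adjMean1 : ℝ :=
  (M.p * M.treatGivenZ true * M.μ₀ true + (1 - M.p) * M.treatGivenZ false * M.μ₀ false)
    / M.treatProb

def adjMean0 : ℝ :=
  (M.p * M.controlGivenZ true * M.μ₁ true + (1 - M.p) * M.controlGivenZ false * M.μ₁ false)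
    / (1 - M.treatProb)

def aceUnadj : ℝ := M.obsMean1 - M.obsMean0

def aceTrue : ℝ := M.π * (M.m11 - M.m01) + (1 - M.π) * (M.m10 - M.m00)

def ace1True : ℝ := M.obsMean1 - M.cfMean1

def ace0True : ℝ := M.cfMean0 - M.obsMean0

def ace1Adj : ℝ := M.obsMean1 - M.adjMean1

def ace0Adj : ℝ := M.adjMean0 - M.obsMean0

def aceAdj : ℝ := M.p * (M.μ₁ true - M.μ₀ true) + (1 - M.p) * (M.μ₁ false - M.μ₀ false)

structure IsMonotone : Prop where
  p_nonneg : 0 ≤ M.p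
  p_le_one : M.p ≤ 1
  π_nonneg : 0 ≤ M.π
  π_le_one : M.π ≤ 1
  p00_pos : 0 < M.p00
  p11_lt_one : M.p11 < 1
  p00_le_p10 : M.p00 ≤ M.p10
  p00_le_p01 : M.p00 ≤ M.p01
  p10_le_p11 : M.p10 ≤ M.p11
  p01_le_p11 : M.p01 ≤ M.p11
  m10_le_m11 : M.m10 ≤ M.m11
  m00_le_m01 : M.m00 ≤ M.m01

theorem treatProb_eq_treatGivenU :
    M.treatProb = (1 - M.π) * M.treatGivenU false + M.π * M.treatGivenU true := by
  simp only [treatProb, treatGivenU, prop]; ring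

theorem one_sub_treatProb_eq_treatGivenU :
    1 - M.treatProb = (1 - M.π) * (1 - M.treatGivenU false) + M.π * (1 - M.treatGivenU true) := by
  simp only [treatProb, treatGivenU, prop]; ring

theorem treatProb_eq_treatGivenZ :
    M.treatProb = M.p * M.treatGivenZ true + (1 - M.p) * M.treatGivenZ false := by
  simp only [treatProb, treatGivenZ, prop]; ring

theorem one_sub_treatProb_eq_controlGivenZ :
    1 - M.treatProb = M.p * M.controlGivenZ true + (1 - M.p) * M.controlGivenZ false := by
  simp only [treatProb, controlGivenZ, prop]; ring

theorem one_sub_controlGivenZ (z : Bool) : 1 - M.controlGivenZ z = M.treatGivenZ z := by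
  simp only [controlGivenZ, treatGivenZ]; ring

theorem mul_sub_mul_eq_of_noInteraction (hadd : M.p11 - M.p10 - M.p01 + M.p00 = 0) :
    M.p10 * M.p01 - M.p11 * M.p00 = (M.p10 - M.p00) * (M.p01 - M.p00) := by
  linear_combination (-M.p00) * hadd

theorem one_sub_mul_sub_mul_eq_of_noInteraction (hadd : M.p11 - M.p10 - M.p01 + M.p00 = 0) :
    (1 - M.p10) * (1 - M.p01) - (1 - M.p11) * (1 - M.p00) = (M.p10 - M.p00) * (M.p01 - M.p00) := by
  linear_combination (1 - M.p00) * hadd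

theorem μ₁_eq_mean₂ (z : Bool) :
    M.μ₁ z = mean₂ ((1 - M.π) * M.prop z false) (M.π * M.prop z true) M.m10 M.m11 := by
  rw [μ₁, mean₂, treatGivenZ]; congr 1 <;> ring

theorem μ₀_eq_mean₂ (z : Bool) :
    M.μ₀ z = mean₂ ((1 - M.π) * (1 - M.prop z false)) (M.π * (1 - M.prop z true)) M.m00 M.m01 := by
  rw [μ₀, mean₂, controlGivenZ]; congr 1 <;> ring

theorem obsMean1_eq_mean₂_treatGivenU :
    M.obsMean1 = mean₂ ((1 - M.π) * M.treatGivenU false) (M.π * M.treatGivenU true)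
      M.m10 M.m11 := by
  simp only [obsMean1, mean₂, treatProb, treatGivenU, prop]; congr 1 <;> ring

theorem obsMean0_eq_mean₂_treatGivenU :
    M.obsMean0 = mean₂ ((1 - M.π) * (1 - M.treatGivenU false)) (M.π * (1 - M.treatGivenU true))
      M.m00 M.m01 := by
  simp only [obsMean0, mean₂, treatProb, treatGivenU, prop]; congr 1 <;> ring

theorem cfMean1_eq_mean₂ :
    M.cfMean1 = mean₂ ((1 - M.π) * M.treatGivenU false) (M.π * M.treatGivenU true)
      M.m00 M.m01 := by
  simp only [cfMean1, mean₂, treatProb, treatGivenU, prop]; congr 1 <;> ring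

theorem cfMean0_eq_mean₂ :
    M.cfMean0 = mean₂ ((1 - M.π) * (1 - M.treatGivenU false)) (M.π * (1 - M.treatGivenU true))
      M.m10 M.m11 := by
  simp only [cfMean0, mean₂, treatProb, treatGivenU, prop]; congr 1 <;> ring

theorem aceTrue_eq_mean₂ :
    M.aceTrue = mean₂ (1 - M.π) M.π M.m10 M.m11 - mean₂ (1 - M.π) M.π M.m00 M.m01 := by
  rw [aceTrue, mean₂_of_add_eq_one (sub_add_cancel _ _), mean₂_of_add_eq_one (sub_add_cancel _ _)]
  ring

theorem adjMean1_eq_mean₂ :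
    M.adjMean1 = mean₂ (M.p * M.treatGivenZ true) ((1 - M.p) * M.treatGivenZ false)
      (M.μ₀ true) (M.μ₀ false) := by
  rw [adjMean1, mean₂, treatProb_eq_treatGivenZ]

theorem adjMean0_eq_mean₂ :
    M.adjMean0 = mean₂ (M.p * M.controlGivenZ true) ((1 - M.p) * M.controlGivenZ false)
      (M.μ₁ true) (M.μ₁ false) := by
  rw [adjMean0, mean₂, one_sub_treatProb_eq_controlGivenZ]

theorem aceAdj_eq_mean₂ :
    M.aceAdj = mean₂ M.p (1 - M.p) (M.μ₁ true) (M.μ₁ false)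
      - mean₂ M.p (1 - M.p) (M.μ₀ true) (M.μ₀ false) := by
  rw [aceAdj, mean₂_of_add_eq_one (add_sub_cancel _ _), mean₂_of_add_eq_one (add_sub_cancel _ _)]
  ring

variable {M}

namespace IsMonotone

theorem treatGivenZ_pos (hM : M.IsMonotone) (z : Bool) : 0 < M.treatGivenZ z := by
  have h10 := hM.p00_pos.trans_le hM.p00_le_p10
  have h01 := hM.p00_pos.trans_le hM.p00_le_p01
  cases z
  · exact mul_add_one_sub_mul_pos hM.π_nonneg hM.π_le_one h01 hM.p00_pos
  · exact mul_add_one_sub_mul_pos hM.π_nonneg hM.π_le_one (h10.trans_le hM.p10_le_p11) h10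

theorem controlGivenZ_pos (hM : M.IsMonotone) (z : Bool) : 0 < M.controlGivenZ z := by
  have h01 := sub_pos.2 (hM.p01_le_p11.trans_lt hM.p11_lt_one)
  have h10 := sub_pos.2 (hM.p10_le_p11.trans_lt hM.p11_lt_one)
  cases z
  · exact mul_add_one_sub_mul_pos hM.π_nonneg hM.π_le_one h01
      (h10.trans_le (sub_le_sub_left hM.p00_le_p10 1))
  · exact mul_add_one_sub_mul_pos hM.π_nonneg hM.π_le_one (sub_pos.2 hM.p11_lt_one) h10

theorem treatProb_pos (hM : M.IsMonotone) : 0 < M.treatProb := by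
  rw [treatProb_eq_treatGivenZ]
  exact mul_add_one_sub_mul_pos hM.p_nonneg hM.p_le_one (hM.treatGivenZ_pos _)
    (hM.treatGivenZ_pos _)

theorem treatProb_lt_one (hM : M.IsMonotone) : M.treatProb < 1 := by
  rw [← sub_pos, one_sub_treatProb_eq_controlGivenZ]
  exact mul_add_one_sub_mul_pos hM.p_nonneg hM.p_le_one (hM.controlGivenZ_pos _)
    (hM.controlGivenZ_pos _)

theorem treatGivenU_false_le_true (hM : M.IsMonotone) : M.treatGivenU false ≤ M.treatGivenU true :=
  add_le_add (mul_le_mul_of_nonneg_left hM.p10_le_p11 hM.p_nonneg)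
    (mul_le_mul_of_nonneg_left hM.p00_le_p01 (sub_nonneg.2 hM.p_le_one))

theorem controlGivenZ_true_le_false (hM : M.IsMonotone) :
    M.controlGivenZ true ≤ M.controlGivenZ false :=
  add_le_add (mul_le_mul_of_nonneg_left (sub_le_sub_left hM.p01_le_p11 1) hM.π_nonneg)
    (mul_le_mul_of_nonneg_left (sub_le_sub_left hM.p00_le_p10 1) (sub_nonneg.2 hM.π_le_one))

theorem μ₁_true_le_false (hM : M.IsMonotone) (hadd : M.p11 - M.p10 - M.p01 + M.p00 = 0) :
    M.μ₁ true ≤ M.μ₁ false := by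
  have hG := hM.treatGivenZ_pos
  simp only [treatGivenZ] at hG
  have hcross : 0 ≤ M.π * (1 - M.π) * (M.p10 * M.p01 - M.p11 * M.p00) := by
    rw [M.mul_sub_mul_eq_of_noInteraction hadd]
    exact mul_nonneg (mul_nonneg hM.π_nonneg (sub_nonneg.2 hM.π_le_one))
      (mul_nonneg (sub_nonneg.2 hM.p00_le_p10) (sub_nonneg.2 hM.p00_le_p01))
  rw [μ₁_eq_mean₂, μ₁_eq_mean₂]
  exact mean₂_le_mean₂ (by linarith [hG true]) (by linarith [hG false])
    (by simp only [prop]; linarith) hM.m10_le_m11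

theorem μ₀_true_le_false (hM : M.IsMonotone) (hadd : M.p11 - M.p10 - M.p01 + M.p00 = 0) :
    M.μ₀ true ≤ M.μ₀ false := by
  have hH := hM.controlGivenZ_pos
  simp only [controlGivenZ] at hH
  have hcross : 0 ≤ M.π * (1 - M.π) * ((1 - M.p10) * (1 - M.p01) - (1 - M.p11) * (1 - M.p00)) := by
    rw [M.one_sub_mul_sub_mul_eq_of_noInteraction hadd]
    exact mul_nonneg (mul_nonneg hM.π_nonneg (sub_nonneg.2 hM.π_le_one))
      (mul_nonneg (sub_nonneg.2 hM.p00_le_p10) (sub_nonneg.2 hM.p00_le_p01))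
  rw [μ₀_eq_mean₂, μ₀_eq_mean₂]
  exact mean₂_le_mean₂ (by linarith [hH true]) (by linarith [hH false])
    (by simp only [prop]; linarith) hM.m00_le_m01

theorem obsMean1_eq_mean₂_μ₁ (hM : M.IsMonotone) :
    M.obsMean1 = mean₂ (M.p * M.treatGivenZ true) ((1 - M.p) * M.treatGivenZ false)
      (M.μ₁ true) (M.μ₁ false) := by
  have h₁ := (hM.treatGivenZ_pos true).ne'
  have h₀ := (hM.treatGivenZ_pos false).ne'
  rw [mean₂, ← treatProb_eq_treatGivenZ, obsMean1, μ₁, μ₁]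
  congr 1
  field_simp
  simp only [prop]; ring

theorem obsMean0_eq_mean₂_μ₀ (hM : M.IsMonotone) :
    M.obsMean0 = mean₂ (M.p * M.controlGivenZ true) ((1 - M.p) * M.controlGivenZ false)
      (M.μ₀ true) (M.μ₀ false) := by
  have h₁ := (hM.controlGivenZ_pos true).ne'
  have h₀ := (hM.controlGivenZ_pos false).ne'
  rw [mean₂, ← one_sub_treatProb_eq_controlGivenZ, obsMean0, μ₀, μ₀]
  congr 1
  field_simp
  simp only [prop]; ring

theorem confounder_bounds (hM : M.IsMonotone) {x₀ x₁ : ℝ} (hx : x₀ ≤ x₁) :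
    mean₂ ((1 - M.π) * (1 - M.treatGivenU false)) (M.π * (1 - M.treatGivenU true)) x₀ x₁
        ≤ mean₂ (1 - M.π) M.π x₀ x₁ ∧
      mean₂ (1 - M.π) M.π x₀ x₁
        ≤ mean₂ ((1 - M.π) * M.treatGivenU false) (M.π * M.treatGivenU true) x₀ x₁ := by
  have hw : (0 : ℝ) < 1 - M.π + M.π := by simp
  have h₀ := sub_nonneg.2 hM.π_le_one
  refine ⟨mean₂_mul_one_sub_le_mean₂ h₀ hM.π_nonneg ?_ hw hM.treatGivenU_false_le_true hx,
    mean₂_le_mean₂_mul h₀ hM.π_nonneg hw ?_ hM.treatGivenU_false_le_true hx⟩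
  · exact M.one_sub_treatProb_eq_treatGivenU ▸ sub_pos.2 hM.treatProb_lt_one
  · simpa only [treatProb_eq_treatGivenU] using hM.treatProb_pos

theorem instrument_bounds (hM : M.IsMonotone) {y₁ y₀ : ℝ} (hy : y₁ ≤ y₀) :
    mean₂ (M.p * M.treatGivenZ true) ((1 - M.p) * M.treatGivenZ false) y₁ y₀
        ≤ mean₂ M.p (1 - M.p) y₁ y₀ ∧
      mean₂ M.p (1 - M.p) y₁ y₀
        ≤ mean₂ (M.p * M.controlGivenZ true) ((1 - M.p) * M.controlGivenZ false) y₁ y₀ := by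
  have hw : (0 : ℝ) < M.p + (1 - M.p) := by simp
  have h₀ := sub_nonneg.2 hM.p_le_one
  simp only [← one_sub_controlGivenZ]
  refine ⟨mean₂_mul_one_sub_le_mean₂ hM.p_nonneg h₀ ?_ hw hM.controlGivenZ_true_le_false hy,
    mean₂_le_mean₂_mul hM.p_nonneg h₀ hw ?_ hM.controlGivenZ_true_le_false hy⟩
  · simpa only [one_sub_controlGivenZ, treatProb_eq_treatGivenZ] using hM.treatProb_pos
  · exact M.one_sub_treatProb_eq_controlGivenZ ▸ sub_pos.2 hM.treatProb_lt_one

theorem zbias (hM : M.IsMonotone) (hadd : M.p11 - M.p10 - M.p01 + M.p00 = 0) :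
    (M.ace1Adj ≥ M.aceUnadj ∧ M.aceUnadj ≥ M.ace1True) ∧
    (M.ace0Adj ≥ M.aceUnadj ∧ M.aceUnadj ≥ M.ace0True) ∧
    (M.aceAdj ≥ M.aceUnadj ∧ M.aceUnadj ≥ M.aceTrue) := by
  obtain ⟨hU₁, hU₁'⟩ := hM.confounder_bounds hM.m10_le_m11
  obtain ⟨hU₀, hU₀'⟩ := hM.confounder_bounds hM.m00_le_m01
  obtain ⟨hZ₁, hZ₁'⟩ := hM.instrument_bounds (hM.μ₁_true_le_false hadd)
  obtain ⟨hZ₀, hZ₀'⟩ := hM.instrument_bounds (hM.μ₀_true_le_false hadd)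
  rw [← obsMean1_eq_mean₂_treatGivenU] at hU₁'
  rw [← obsMean0_eq_mean₂_treatGivenU] at hU₀
  rw [← hM.obsMean1_eq_mean₂_μ₁] at hZ₁
  rw [← hM.obsMean0_eq_mean₂_μ₀] at hZ₀'
  simp only [aceUnadj, ace1True, ace0True, ace1Adj, ace0Adj, cfMean1_eq_mean₂, cfMean0_eq_mean₂,
    adjMean1_eq_mean₂, adjMean0_eq_mean₂, aceAdj_eq_mean₂, aceTrue_eq_mean₂]
  refine ⟨⟨?_, ?_⟩, ⟨?_, ?_⟩, ?_, ?_⟩ <;> linarith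

end IsMonotone

end BinaryModel

end

theorem zbias_binary_additive_general
    (p π : ℝ) (hp : 0 < p) (hp' : p < 1) (hπ : 0 < π) (hπ' : π < 1)
    (p11 p10 p01 p00 : ℝ)
    (h00pos : 0 < p00) (h11lt : p11 < 1)
    (m11 m10 m01 m00 : ℝ)  -- m_a(u): m11 = m_1(1), m10 = m_1(0), m01 = m_0(1), m00 = m_0(0)
    -- (a) no additive interaction
    (hNoAdd : p11 - p10 - p01 + p00 = 0)
    -- (b) monotonicity
    (hMono1 : p11 ≥ max p10 p01) (hMono2 : min p10 p01 ≥ p00)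
    (hMonoY1 : m11 ≥ m10) (hMonoY0 : m01 ≥ m00)
    -- definitions of the population quantities
    (f : ℝ) (hf : f = p * π * p11 + p * (1 - π) * p10 + (1 - p) * π * p01
      + (1 - p) * (1 - π) * p00)
    (EY1 : ℝ) (hEY1 : EY1 = (p * π * p11 * m11 + p * (1 - π) * p10 * m10
      + (1 - p) * π * p01 * m11 + (1 - p) * (1 - π) * p00 * m10) / f)
    (EY0 : ℝ) (hEY0 : EY0 = (p * π * (1 - p11) * m01 + p * (1 - π) * (1 - p10) * m00
      + (1 - p) * π * (1 - p01) * m01 + (1 - p) * (1 - π) * (1 - p00) * m00) / (1 - f))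
    (ACEunadj : ℝ) (hACEunadj : ACEunadj = EY1 - EY0)
    (ACEtrue : ℝ) (hACEtrue : ACEtrue = π * (m11 - m01) + (1 - π) * (m10 - m00))
    (ACE1true : ℝ) (hACE1true : ACE1true = EY1 - (p * π * p11 * m01
      + p * (1 - π) * p10 * m00 + (1 - p) * π * p01 * m01
      + (1 - p) * (1 - π) * p00 * m00) / f)
    (ACE0true : ℝ) (hACE0true : ACE0true = (p * π * (1 - p11) * m11
      + p * (1 - π) * (1 - p10) * m10 + (1 - p) * π * (1 - p01) * m11
      + (1 - p) * (1 - π) * (1 - p00) * m10) / (1 - f) - EY0)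
    (μ1 μ0 : ℝ → ℝ)
    (hμ1one : μ1 1 = (π * p11 * m11 + (1 - π) * p10 * m10) / (π * p11 + (1 - π) * p10))
    (hμ1zero : μ1 0 = (π * p01 * m11 + (1 - π) * p00 * m10) / (π * p01 + (1 - π) * p00))
    (hμ0one : μ0 1 = (π * (1 - p11) * m01 + (1 - π) * (1 - p10) * m00)
      / (π * (1 - p11) + (1 - π) * (1 - p10)))
    (hμ0zero : μ0 0 = (π * (1 - p01) * m01 + (1 - π) * (1 - p00) * m00)
      / (π * (1 - p01) + (1 - π) * (1 - p00)))
    (ACE1adj : ℝ) (hACE1adj : ACE1adj = EY1 - (p * (π * p11 + (1 - π) * p10) * μ0 1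
      + (1 - p) * (π * p01 + (1 - π) * p00) * μ0 0) / f)
    (ACE0adj : ℝ) (hACE0adj : ACE0adj = (p * (π * (1 - p11) + (1 - π) * (1 - p10)) * μ1 1
      + (1 - p) * (π * (1 - p01) + (1 - π) * (1 - p00)) * μ1 0) / (1 - f) - EY0)
    (ACEadj : ℝ) (hACEadj : ACEadj = p * (μ1 1 - μ0 1) + (1 - p) * (μ1 0 - μ0 0)) :
    (ACE1adj ≥ ACEunadj ∧ ACEunadj ≥ ACE1true) ∧
    (ACE0adj ≥ ACEunadj ∧ ACEunadj ≥ ACE0true) ∧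
    (ACEadj ≥ ACEunadj ∧ ACEunadj ≥ ACEtrue) := by
  obtain ⟨h10_le_11, h01_le_11⟩ := max_le_iff.mp hMono1
  obtain ⟨h00_le_10, h00_le_01⟩ := le_min_iff.mp hMono2
  subst hf hEY1 hEY0 hACEunadj hACEtrue hACE1true hACE0true hACE1adj hACE0adj hACEadj
  rw [hμ1one, hμ1zero, hμ0one, hμ0zero]
  exact BinaryModel.IsMonotone.zbias (M := ⟨p, π, p11, p10, p01, p00, m11, m10, m01, m00⟩)
    ⟨hp.le, hp'.le, hπ.le, hπ'.le, h00pos, h11lt, h00_le_10, h00_le_01, h10_le_11, h01_le_11,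
      hMonoY1, hMonoY0⟩ hNoAdd

/-- Corollary 1: Z-Bias with binary instrument and binary confounder,
no additive interaction. -/
theorem zbias_binary_additive
    (p π : ℝ) (hp : 0 < p) (hp' : p < 1) (hπ : 0 < π) (hπ' : π < 1)
    (p11 p10 p01 p00 : ℝ)
    (h11 : p11 ∈ Set.Icc (0:ℝ) 1) (h10 : p10 ∈ Set.Icc (0:ℝ) 1)
    (h01 : p01 ∈ Set.Icc (0:ℝ) 1) (h00 : p00 ∈ Set.Icc (0:ℝ) 1)
    (h00pos : 0 < p00) (h11lt : p11 < 1)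
    (m11 m10 m01 m00 : ℝ)  -- m_a(u): m11 = m_1(1), m10 = m_1(0), m01 = m_0(1), m00 = m_0(0)
    -- (a) no additive interaction
    (hNoAdd : p11 - p10 - p01 + p00 = 0)
    -- (b) monotonicity
    (hMono1 : p11 ≥ max p10 p01) (hMono2 : min p10 p01 ≥ p00)
    (hMonoY1 : m11 ≥ m10) (hMonoY0 : m01 ≥ m00)
    -- definitions of the population quantities
    (f : ℝ) (hf : f = p * π * p11 + p * (1 - π) * p10 + (1 - p) * π * p01
      + (1 - p) * (1 - π) * p00)
    (EY1 : ℝ) (hEY1 : EY1 = (p * π * p11 * m11 + p * (1 - π) * p10 * m10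
      + (1 - p) * π * p01 * m11 + (1 - p) * (1 - π) * p00 * m10) / f)
    (EY0 : ℝ) (hEY0 : EY0 = (p * π * (1 - p11) * m01 + p * (1 - π) * (1 - p10) * m00
      + (1 - p) * π * (1 - p01) * m01 + (1 - p) * (1 - π) * (1 - p00) * m00) / (1 - f))
    (ACEunadj : ℝ) (hACEunadj : ACEunadj = EY1 - EY0)
    (ACEtrue : ℝ) (hACEtrue : ACEtrue = π * (m11 - m01) + (1 - π) * (m10 - m00))
    (ACE1true : ℝ) (hACE1true : ACE1true = EY1 - (p * π * p11 * m01
      + p * (1 - π) * p10 * m00 + (1 - p) * π * p01 * m01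
      + (1 - p) * (1 - π) * p00 * m00) / f)
    (ACE0true : ℝ) (hACE0true : ACE0true = (p * π * (1 - p11) * m11
      + p * (1 - π) * (1 - p10) * m10 + (1 - p) * π * (1 - p01) * m11
      + (1 - p) * (1 - π) * (1 - p00) * m10) / (1 - f) - EY0)
    (μ1 μ0 : ℝ → ℝ)
    (hμ1one : μ1 1 = (π * p11 * m11 + (1 - π) * p10 * m10) / (π * p11 + (1 - π) * p10))
    (hμ1zero : μ1 0 = (π * p01 * m11 + (1 - π) * p00 * m10) / (π * p01 + (1 - π) * p00))
    (hμ0one : μ0 1 = (π * (1 - p11) * m01 + (1 - π) * (1 - p10) * m00)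
      / (π * (1 - p11) + (1 - π) * (1 - p10)))
    (hμ0zero : μ0 0 = (π * (1 - p01) * m01 + (1 - π) * (1 - p00) * m00)
      / (π * (1 - p01) + (1 - π) * (1 - p00)))
    (ACE1adj : ℝ) (hACE1adj : ACE1adj = EY1 - (p * (π * p11 + (1 - π) * p10) * μ0 1
      + (1 - p) * (π * p01 + (1 - π) * p00) * μ0 0) / f)
    (ACE0adj : ℝ) (hACE0adj : ACE0adj = (p * (π * (1 - p11) + (1 - π) * (1 - p10)) * μ1 1
      + (1 - p) * (π * (1 - p01) + (1 - π) * (1 - p00)) * μ1 0) / (1 - f) - EY0)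
    (ACEadj : ℝ) (hACEadj : ACEadj = p * (μ1 1 - μ0 1) + (1 - p) * (μ1 0 - μ0 0)) :
    (ACE1adj ≥ ACEunadj ∧ ACEunadj ≥ ACE1true) ∧
    (ACE0adj ≥ ACEunadj ∧ ACEunadj ≥ ACE0true) ∧
    (ACEadj ≥ ACEunadj ∧ ACEunadj ≥ ACEtrue) :=
  zbias_binary_additive_general p π hp hp' hπ hπ' p11 p10 p01 p00 h00pos h11lt m11 m10 m01 m00
    hNoAdd hMono1 hMono2 hMonoY1 hMonoY0 f hf EY1 hEY1 EY0 hEY0 ACEunadj hACEunadj ACEtrue hACEtrue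
    ACE1true hACE1true ACE0true hACE0true μ1 μ0 hμ1one hμ1zero hμ0one hμ0zero ACE1adj hACE1adj
    ACE0adj hACE0adj ACEadj hACEadj
end

section
/- Corollary 2 (Z-Bias with binary instrument and binary confounder, no multiplicative interaction). In the binary parametric setup, assume: (a') no multiplicative interaction: p11·p00 = p10·p01; (b) monotonicity: p11 ≥ max(p10, p01), min(p10, p01) ≥ p00, and m_1(1) ≥ m_1(0), m_0(1) ≥ m_0(0). Then ACE_1^adj ≥ ACE_unadj ≥ ACE_1^true, ACE_0^adj ≥ ACE_unadj ≥ ACE_0^true, and ACE_adj ≥ ACE_unadj ≥ ACE_true. -/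
set_option maxHeartbeats 1000000


/-- Corollary 2: Z-Bias with binary instrument and binary confounder,
no multiplicative interaction. -/
theorem zbias_binary_multiplicative
    (p π : ℝ) (hp : 0 < p) (hp' : p < 1) (hπ : 0 < π) (hπ' : π < 1)
    (p11 p10 p01 p00 : ℝ)
    (h11 : p11 ∈ Set.Icc (0:ℝ) 1) (h10 : p10 ∈ Set.Icc (0:ℝ) 1)
    (h01 : p01 ∈ Set.Icc (0:ℝ) 1) (h00 : p00 ∈ Set.Icc (0:ℝ) 1)
    (h00pos : 0 < p00) (h11lt : p11 < 1)
    (m11 m10 m01 m00 : ℝ)  -- m_a(u): m11 = m_1(1), m10 = m_1(0), m01 = m_0(1), m00 = m_0(0)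
    -- (a') no multiplicative interaction
    (hNoMul : p11 * p00 = p10 * p01)
    -- (b) monotonicity
    (hMono1 : p11 ≥ max p10 p01) (hMono2 : min p10 p01 ≥ p00)
    (hMonoY1 : m11 ≥ m10) (hMonoY0 : m01 ≥ m00)
    -- definitions of the population quantities
    (f : ℝ) (hf : f = p * π * p11 + p * (1 - π) * p10 + (1 - p) * π * p01
      + (1 - p) * (1 - π) * p00)
    (EY1 : ℝ) (hEY1 : EY1 = (p * π * p11 * m11 + p * (1 - π) * p10 * m10
      + (1 - p) * π * p01 * m11 + (1 - p) * (1 - π) * p00 * m10) / f)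
    (EY0 : ℝ) (hEY0 : EY0 = (p * π * (1 - p11) * m01 + p * (1 - π) * (1 - p10) * m00
      + (1 - p) * π * (1 - p01) * m01 + (1 - p) * (1 - π) * (1 - p00) * m00) / (1 - f))
    (ACEunadj : ℝ) (hACEunadj : ACEunadj = EY1 - EY0)
    (ACEtrue : ℝ) (hACEtrue : ACEtrue = π * (m11 - m01) + (1 - π) * (m10 - m00))
    (ACE1true : ℝ) (hACE1true : ACE1true = EY1 - (p * π * p11 * m01
      + p * (1 - π) * p10 * m00 + (1 - p) * π * p01 * m01
      + (1 - p) * (1 - π) * p00 * m00) / f)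
    (ACE0true : ℝ) (hACE0true : ACE0true = (p * π * (1 - p11) * m11
      + p * (1 - π) * (1 - p10) * m10 + (1 - p) * π * (1 - p01) * m11
      + (1 - p) * (1 - π) * (1 - p00) * m10) / (1 - f) - EY0)
    (μ1 μ0 : ℝ → ℝ)
    (hμ1one : μ1 1 = (π * p11 * m11 + (1 - π) * p10 * m10) / (π * p11 + (1 - π) * p10))
    (hμ1zero : μ1 0 = (π * p01 * m11 + (1 - π) * p00 * m10) / (π * p01 + (1 - π) * p00))
    (hμ0one : μ0 1 = (π * (1 - p11) * m01 + (1 - π) * (1 - p10) * m00)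
      / (π * (1 - p11) + (1 - π) * (1 - p10)))
    (hμ0zero : μ0 0 = (π * (1 - p01) * m01 + (1 - π) * (1 - p00) * m00)
      / (π * (1 - p01) + (1 - π) * (1 - p00)))
    (ACE1adj : ℝ) (hACE1adj : ACE1adj = EY1 - (p * (π * p11 + (1 - π) * p10) * μ0 1
      + (1 - p) * (π * p01 + (1 - π) * p00) * μ0 0) / f)
    (ACE0adj : ℝ) (hACE0adj : ACE0adj = (p * (π * (1 - p11) + (1 - π) * (1 - p10)) * μ1 1
      + (1 - p) * (π * (1 - p01) + (1 - π) * (1 - p00)) * μ1 0) / (1 - f) - EY0)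
    (ACEadj : ℝ) (hACEadj : ACEadj = p * (μ1 1 - μ0 1) + (1 - p) * (μ1 0 - μ0 0)) :
    (ACE1adj ≥ ACEunadj ∧ ACEunadj ≥ ACE1true) ∧
    (ACE0adj ≥ ACEunadj ∧ ACEunadj ≥ ACE0true) ∧
    (ACEadj ≥ ACEunadj ∧ ACEunadj ≥ ACEtrue) := by

  -- basic positivity facts
  obtain ⟨h11a, h11b⟩ := h11
  obtain ⟨h10a, h10b⟩ := h10
  obtain ⟨h01a, h01b⟩ := h01
  obtain ⟨h00a, h00b⟩ := h00
  have hb10 : p00 ≤ p10 := (le_min_iff.mp hMono2).1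
  have hb01 : p00 ≤ p01 := (le_min_iff.mp hMono2).2
  have ha10 : p10 ≤ p11 := (max_le_iff.mp hMono1).1
  have ha01 : p01 ≤ p11 := (max_le_iff.mp hMono1).2
  have h10pos : 0 < p10 := lt_of_lt_of_le h00pos hb10
  have h01pos : 0 < p01 := lt_of_lt_of_le h00pos hb01
  have h11pos : 0 < p11 := lt_of_lt_of_le h10pos ha10
  have h10lt : p10 < 1 := lt_of_le_of_lt ha10 h11lt
  have h01lt : p01 < 1 := lt_of_le_of_lt ha01 h11lt
  have h00lt : p00 < 1 := lt_of_le_of_lt hb10 h10lt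
  have hπ1 : 0 < 1 - π := by linarith
  have hp1 : 0 < 1 - p := by linarith
  have hD1pos : 0 < π * p11 + (1 - π) * p10 := add_pos (mul_pos hπ h11pos) (mul_pos hπ1 h10pos)
  have hD0pos : 0 < π * p01 + (1 - π) * p00 := add_pos (mul_pos hπ h01pos) (mul_pos hπ1 h00pos)
  have hH1pos : 0 < π * (1 - p11) + (1 - π) * (1 - p10) :=
    add_pos (mul_pos hπ (by linarith)) (mul_pos hπ1 (by linarith))
  have hH0pos : 0 < π * (1 - p01) + (1 - π) * (1 - p00) :=
    add_pos (mul_pos hπ (by linarith)) (mul_pos hπ1 (by linarith))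
  have hfpos : 0 < f := by
    rw [hf]; linarith [mul_pos (mul_pos hp hπ) h11pos, mul_pos (mul_pos hp hπ1) h10pos,
      mul_pos (mul_pos hp1 hπ) h01pos, mul_pos (mul_pos hp1 hπ1) h00pos]
  have h1fpos : 0 < 1 - f := by
    rw [hf]; linarith [mul_pos (mul_pos hp hπ) (by linarith : 0 < 1 - p11),
      mul_pos (mul_pos hp hπ1) (by linarith : 0 < 1 - p10),
      mul_pos (mul_pos hp1 hπ) (by linarith : 0 < 1 - p01),
      mul_pos (mul_pos hp1 hπ1) (by linarith : 0 < 1 - p00)]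
  -- consequences of no multiplicative interaction
  have hsum : p10 + p01 ≤ p11 + p00 := by
    have key : p11 * (p11 + p00 - p10 - p01) = (p11 - p10) * (p11 - p01) := by
      linear_combination hNoMul
    have h2 : 0 ≤ p11 * (p11 + p00 - p10 - p01) := by
      rw [key]; exact mul_nonneg (sub_nonneg.2 ha10) (sub_nonneg.2 ha01)
    have h3 := le_of_mul_le_mul_left (by linarith : p11 * 0 ≤ p11 * (p11 + p00 - p10 - p01)) h11pos
    linarith
  have hzero : (m01 - m00) * (π * (1 - π)) * (p11 * p00 - p10 * p01) = 0 := by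
    rw [hNoMul]; ring
  have hμ0le : μ0 1 ≤ μ0 0 := by
    rw [hμ0one, hμ0zero, div_le_div_iff₀ hH1pos hH0pos]
    linarith [mul_nonneg (mul_nonneg (sub_nonneg.2 hMonoY0) (mul_pos hπ hπ1).le)
      (sub_nonneg.2 hsum), hzero]
  have hM : μ1 1 = μ1 0 := by
    rw [hμ1one, hμ1zero, div_eq_div_iff hD1pos.ne' hD0pos.ne']
    linear_combination π * (1 - π) * (m11 - m10) * hNoMul
  have hEY1M : EY1 = μ1 1 := by
    rw [hEY1, hμ1one, div_eq_div_iff hfpos.ne' hD1pos.ne']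
    linear_combination (-(π * p11 * m11 + (1 - π) * p10 * m10)) * hf
      - (1 - p) * π * (1 - π) * (m11 - m10) * hNoMul
  -- rewriting EY0 as a weighted average of μ0 1 and μ0 0
  have hnum : p * (π * (1 - p11) + (1 - π) * (1 - p10)) * μ0 1
      + (1 - p) * (π * (1 - p01) + (1 - π) * (1 - p00)) * μ0 0
      = p * (π * (1 - p11) * m01 + (1 - π) * (1 - p10) * m00)
        + (1 - p) * (π * (1 - p01) * m01 + (1 - π) * (1 - p00) * m00) := by
    rw [hμ0one, hμ0zero]
    field_simp [hH1pos.ne', hH0pos.ne']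
  have hden' : p * (π * (1 - p11) + (1 - π) * (1 - p10))
      + (1 - p) * (π * (1 - p01) + (1 - π) * (1 - p00)) = 1 - f := by
    rw [hf]; ring
  have hEY0' : EY0 = (p * (π * (1 - p11) + (1 - π) * (1 - p10)) * μ0 1
      + (1 - p) * (π * (1 - p01) + (1 - π) * (1 - p00)) * μ0 0)
      / (p * (π * (1 - p11) + (1 - π) * (1 - p10))
        + (1 - p) * (π * (1 - p01) + (1 - π) * (1 - p00))) := by
    rw [hEY0, hnum, hden']
    congr 1
    ring
  have hdenpos : 0 < p * (π * (1 - p11) + (1 - π) * (1 - p10))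
      + (1 - p) * (π * (1 - p01) + (1 - π) * (1 - p00)) := by
    linarith [mul_pos hp hH1pos, mul_pos hp1 hH0pos]
  have hfD : f = p * (π * p11 + (1 - π) * p10) + (1 - p) * (π * p01 + (1 - π) * p00) := by
    rw [hf]; ring
  have hD01 : π * p01 + (1 - π) * p00 ≤ π * p11 + (1 - π) * p10 := by
    have t1 := mul_nonneg hπ.le (sub_nonneg.2 ha01)
    have t2 := mul_nonneg hπ1.le (sub_nonneg.2 hb10)
    linarith
  have hDH : (π * p01 + (1 - π) * p00) * (π * (1 - p11) + (1 - π) * (1 - p10))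
      ≤ (π * p11 + (1 - π) * p10) * (π * (1 - p01) + (1 - π) * (1 - p00)) := by
    linarith [hD01, mul_nonneg (mul_nonneg hπ.le hπ1.le) (sub_nonneg.2 (le_trans hb10 ha10)), mul_pos hπ hπ1]
  -- key inequality for the adjusted estimands
  have hkey : (p * (π * p11 + (1 - π) * p10) * μ0 1
      + (1 - p) * (π * p01 + (1 - π) * p00) * μ0 0) / f ≤ EY0 := by
    rw [hEY0', hfD, div_le_div_iff₀ (by rw [← hfD]; exact hfpos) hdenpos]
    linarith [mul_nonneg (mul_nonneg (mul_nonneg hp.le hp1.le) (sub_nonneg.2 hμ0le))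
      (sub_nonneg.2 hDH)]
  have hΔ : 0 ≤ p * (p11 - p10) + (1 - p) * (p01 - p00) :=
    add_nonneg (mul_nonneg hp.le (by linarith)) (mul_nonneg hp1.le (by linarith))
  refine ⟨⟨?_, ?_⟩, ⟨?_, ?_⟩, ?_, ?_⟩
  · -- ACE1adj ≥ ACEunadj
    rw [hACE1adj, hACEunadj]
    have := hkey
    linarith
  · -- ACEunadj ≥ ACE1true
    rw [hACEunadj, hACE1true]
    have key : EY0 ≤ (p * π * p11 * m01 + p * (1 - π) * p10 * m00 + (1 - p) * π * p01 * m01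
        + (1 - p) * (1 - π) * p00 * m00) / f := by
      rw [hEY0, div_le_div_iff₀ h1fpos hfpos, hf]
      linarith [mul_nonneg (mul_nonneg (sub_nonneg.2 hMonoY0) (mul_pos hπ hπ1).le) hΔ]
    linarith
  · -- ACE0adj ≥ ACEunadj
    have h3 : ACE0adj = ACEunadj := by
      rw [hACE0adj, hACEunadj, ← hM, hEY1M]
      have hn : p * (π * (1 - p11) + (1 - π) * (1 - p10)) * μ1 1
          + (1 - p) * (π * (1 - p01) + (1 - π) * (1 - p00)) * μ1 1
          = (1 - f) * μ1 1 := by rw [hf]; ring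
      rw [hn, mul_comm, mul_div_assoc, div_self h1fpos.ne', mul_one]
    exact ge_of_eq h3
  · -- ACEunadj ≥ ACE0true
    rw [hACEunadj, hACE0true]
    have key : (p * π * (1 - p11) * m11 + p * (1 - π) * (1 - p10) * m10
        + (1 - p) * π * (1 - p01) * m11 + (1 - p) * (1 - π) * (1 - p00) * m10) / (1 - f)
        ≤ EY1 := by
      rw [hEY1, div_le_div_iff₀ h1fpos hfpos, hf]
      linarith [mul_nonneg (mul_nonneg (sub_nonneg.2 hMonoY1) (mul_pos hπ hπ1).le) hΔ]
    linarith
  · -- ACEadj ≥ ACEunadj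
    have h5 : ACEadj - ACEunadj = EY0 - (p * μ0 1 + (1 - p) * μ0 0) := by
      rw [hACEadj, hACEunadj, hEY1M, ← hM]
      ring
    have h5b : p * μ0 1 + (1 - p) * μ0 0 ≤ EY0 := by
      rw [hEY0', le_div_iff₀ hdenpos]
      have hH01 : π * (1 - p11) + (1 - π) * (1 - p10) ≤ π * (1 - p01) + (1 - π) * (1 - p00) := by
        linarith [hD01]
      linarith [mul_nonneg (mul_nonneg (mul_nonneg hp.le hp1.le) (sub_nonneg.2 hμ0le))
        (sub_nonneg.2 hH01)]
    linarith
  · -- ACEunadj ≥ ACEtrue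
    rw [hACEunadj, hACEtrue]
    have hA : π * m11 + (1 - π) * m10 ≤ EY1 := by
      rw [hEY1, le_div_iff₀ hfpos, hf]
      linarith [mul_nonneg (mul_nonneg (sub_nonneg.2 hMonoY1) (mul_pos hπ hπ1).le) hΔ]
    have hB : EY0 ≤ π * m01 + (1 - π) * m00 := by
      rw [hEY0, div_le_iff₀ h1fpos, hf]
      linarith [mul_nonneg (mul_nonneg (sub_nonneg.2 hMonoY0) (mul_pos hπ hπ1).le) hΔ]
    linarith
end

section
/- Z-Bias with binary instrument and binary confounder under the weaker interaction condition (2). In the binary parametric setup, assume: (a'') p11·p00 ≤ p10·p01 and (1−p11)(1−p00) ≤ (1−p10)(1−p01); (b) monotonicity: p11 ≥ max(p10, p01), min(p10, p01) ≥ p00, and m_1(1) ≥ m_1(0), m_0(1) ≥ m_0(0). Then ACE_1^adj ≥ ACE_unadj ≥ ACE_1^true, ACE_0^adj ≥ ACE_unadj ≥ ACE_0^true, and ACE_adj ≥ ACE_unadj ≥ ACE_true. -/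
private lemma zbias_aux1 (q q' g1 g0 h1 h0 N1 N0 F F' : ℝ)
    (hFg : F = q * g1 + q' * g0) (hFh : F' = q * h1 + q' * h0)
    (hF : F ≠ 0) (hF' : F' ≠ 0) (hh1 : h1 ≠ 0) (hh0 : h0 ≠ 0) :
    (q * N1 + q' * N0) / F' - (q * g1 * (N1 / h1) + q' * g0 * (N0 / h0)) / F
      = q * q' * (g0 * h1 - g1 * h0) * (N1 * h0 - N0 * h1) / (F * F' * h1 * h0) := by
  subst hFg hFh
  field_simp
  ring

private lemma zbias_aux2 (q q' g1 g0 x y F : ℝ)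
    (hq : q + q' = 1) (hFg : F = q * g1 + q' * g0) (hF : F ≠ 0) :
    (q * x + q' * y) - (q * g1 * x + q' * g0 * y) / F
      = q * q' * (g0 - g1) * (x - y) / F := by
  have hq' : q' = 1 - q := by linarith
  subst hq' hFg
  field_simp
  ring

set_option maxHeartbeats 4000000 in
/-- Z-Bias with binary instrument and binary confounder,
the weaker interaction condition (2). -/
theorem zbias_binary_weak_interaction
    (p π : ℝ) (hp : 0 < p) (hp' : p < 1) (hπ : 0 < π) (hπ' : π < 1)
    (p11 p10 p01 p00 : ℝ)
    (h11 : p11 ∈ Set.Icc (0:ℝ) 1) (h10 : p10 ∈ Set.Icc (0:ℝ) 1)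
    (h01 : p01 ∈ Set.Icc (0:ℝ) 1) (h00 : p00 ∈ Set.Icc (0:ℝ) 1)
    (h00pos : 0 < p00) (h11lt : p11 < 1)
    (m11 m10 m01 m00 : ℝ)  -- m_a(u): m11 = m_1(1), m10 = m_1(0), m01 = m_0(1), m00 = m_0(0)
    -- (a'') the weaker interaction condition (2)
    (hWeak1 : p11 * p00 ≤ p10 * p01)
    (hWeak2 : (1 - p11) * (1 - p00) ≤ (1 - p10) * (1 - p01))
    -- (b) monotonicity
    (hMono1 : p11 ≥ max p10 p01) (hMono2 : min p10 p01 ≥ p00)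
    (hMonoY1 : m11 ≥ m10) (hMonoY0 : m01 ≥ m00)
    -- definitions of the population quantities
    (f : ℝ) (hf : f = p * π * p11 + p * (1 - π) * p10 + (1 - p) * π * p01
      + (1 - p) * (1 - π) * p00)
    (EY1 : ℝ) (hEY1 : EY1 = (p * π * p11 * m11 + p * (1 - π) * p10 * m10
      + (1 - p) * π * p01 * m11 + (1 - p) * (1 - π) * p00 * m10) / f)
    (EY0 : ℝ) (hEY0 : EY0 = (p * π * (1 - p11) * m01 + p * (1 - π) * (1 - p10) * m00
      + (1 - p) * π * (1 - p01) * m01 + (1 - p) * (1 - π) * (1 - p00) * m00) / (1 - f))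
    (ACEunadj : ℝ) (hACEunadj : ACEunadj = EY1 - EY0)
    (ACEtrue : ℝ) (hACEtrue : ACEtrue = π * (m11 - m01) + (1 - π) * (m10 - m00))
    (ACE1true : ℝ) (hACE1true : ACE1true = EY1 - (p * π * p11 * m01
      + p * (1 - π) * p10 * m00 + (1 - p) * π * p01 * m01
      + (1 - p) * (1 - π) * p00 * m00) / f)
    (ACE0true : ℝ) (hACE0true : ACE0true = (p * π * (1 - p11) * m11
      + p * (1 - π) * (1 - p10) * m10 + (1 - p) * π * (1 - p01) * m11
      + (1 - p) * (1 - π) * (1 - p00) * m10) / (1 - f) - EY0)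
    (μ1 μ0 : ℝ → ℝ)
    (hμ1one : μ1 1 = (π * p11 * m11 + (1 - π) * p10 * m10) / (π * p11 + (1 - π) * p10))
    (hμ1zero : μ1 0 = (π * p01 * m11 + (1 - π) * p00 * m10) / (π * p01 + (1 - π) * p00))
    (hμ0one : μ0 1 = (π * (1 - p11) * m01 + (1 - π) * (1 - p10) * m00)
      / (π * (1 - p11) + (1 - π) * (1 - p10)))
    (hμ0zero : μ0 0 = (π * (1 - p01) * m01 + (1 - π) * (1 - p00) * m00)
      / (π * (1 - p01) + (1 - π) * (1 - p00)))
    (ACE1adj : ℝ) (hACE1adj : ACE1adj = EY1 - (p * (π * p11 + (1 - π) * p10) * μ0 1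
      + (1 - p) * (π * p01 + (1 - π) * p00) * μ0 0) / f)
    (ACE0adj : ℝ) (hACE0adj : ACE0adj = (p * (π * (1 - p11) + (1 - π) * (1 - p10)) * μ1 1
      + (1 - p) * (π * (1 - p01) + (1 - π) * (1 - p00)) * μ1 0) / (1 - f) - EY0)
    (ACEadj : ℝ) (hACEadj : ACEadj = p * (μ1 1 - μ0 1) + (1 - p) * (μ1 0 - μ0 0)) :
    (ACE1adj ≥ ACEunadj ∧ ACEunadj ≥ ACE1true) ∧
    (ACE0adj ≥ ACEunadj ∧ ACEunadj ≥ ACE0true) ∧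
    (ACEadj ≥ ACEunadj ∧ ACEunadj ≥ ACEtrue) := by
  obtain ⟨h11a, h11b⟩ := h11
  obtain ⟨h10a, h10b⟩ := h10
  obtain ⟨h01a, h01b⟩ := h01
  obtain ⟨h00a, h00b⟩ := h00
  have hp1 : (0:ℝ) < 1 - p := by linarith only [hp']
  have hπ1 : (0:ℝ) < 1 - π := by linarith only [hπ']
  have hA : p10 ≤ p11 := le_trans (le_max_left _ _) hMono1
  have hB : p01 ≤ p11 := le_trans (le_max_right _ _) hMono1
  have hC : p00 ≤ p10 := hMono2.trans (min_le_left _ _)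
  have hD : p00 ≤ p01 := hMono2.trans (min_le_right _ _)
  have hm1 : (0:ℝ) ≤ m11 - m10 := by linarith only [hMonoY1]
  have hm0 : (0:ℝ) ≤ m01 - m00 := by linarith only [hMonoY0]
  have hW1' : (0:ℝ) ≤ p01 * p10 - p11 * p00 := by
    have hc := mul_comm p10 p01; linarith only [hWeak1, hc]
  have hW2' : (0:ℝ) ≤ (1 - p10) * (1 - p01) - (1 - p11) * (1 - p00) := by
    linarith only [hWeak2]
  -- positivity of the denominators
  have hD1 : (0:ℝ) < π * p11 + (1 - π) * p10 := by
    have t1 := mul_pos hπ (show (0:ℝ) < p11 by linarith only [h00pos, hC, hA])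
    have t2 := mul_nonneg hπ1.le (show (0:ℝ) ≤ p10 by linarith only [h00pos, hC])
    linarith only [t1, t2]
  have hD0 : (0:ℝ) < π * p01 + (1 - π) * p00 := by
    have t1 := mul_nonneg hπ.le h01a
    have t2 := mul_pos hπ1 h00pos
    linarith only [t1, t2]
  have hE1 : (0:ℝ) < π * (1 - p11) + (1 - π) * (1 - p10) := by
    have t1 := mul_pos hπ (show (0:ℝ) < 1 - p11 by linarith only [h11lt])
    have t2 := mul_nonneg hπ1.le (show (0:ℝ) ≤ 1 - p10 by linarith only [hA, h11lt])
    linarith only [t1, t2]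
  have hE0 : (0:ℝ) < π * (1 - p01) + (1 - π) * (1 - p00) := by
    have t1 := mul_nonneg hπ.le (show (0:ℝ) ≤ 1 - p01 by linarith only [h01b])
    have t2 := mul_pos hπ1 (show (0:ℝ) < 1 - p00 by linarith only [hC, hA, h11lt])
    linarith only [t1, t2]
  have hf0 : 0 < f := by
    rw [hf]
    have t1 := mul_nonneg (mul_nonneg hp.le hπ.le) h11a
    have t2 := mul_nonneg (mul_nonneg hp.le hπ1.le) h10a
    have t3 := mul_nonneg (mul_nonneg hp1.le hπ.le) h01a
    have t4 := mul_pos (mul_pos hp1 hπ1) h00pos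
    linarith only [t1, t2, t3, t4]
  have h1f0 : 0 < 1 - f := by
    rw [hf]
    have e : 1 - (p * π * p11 + p * (1 - π) * p10 + (1 - p) * π * p01
        + (1 - p) * (1 - π) * p00) = p * π * (1 - p11) + p * (1 - π) * (1 - p10)
        + (1 - p) * π * (1 - p01) + (1 - p) * (1 - π) * (1 - p00) := by ring
    rw [e]
    have t1 := mul_pos (mul_pos hp hπ) (show (0:ℝ) < 1 - p11 by linarith only [h11lt])
    have t2 := mul_nonneg (mul_nonneg hp.le hπ1.le)
      (show (0:ℝ) ≤ 1 - p10 by linarith only [hA, h11lt])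
    have t3 := mul_nonneg (mul_nonneg hp1.le hπ.le)
      (show (0:ℝ) ≤ 1 - p01 by linarith only [h01b])
    have t4 := mul_nonneg (mul_nonneg hp1.le hπ1.le)
      (show (0:ℝ) ≤ 1 - p00 by linarith only [hC, hA, h11lt])
    linarith only [t1, t2, t3, t4]
  -- nonnegativity of key combinations
  have hDd : (0:ℝ) ≤ π * (p11 - p01) + (1 - π) * (p10 - p00) := by
    have t1 := mul_nonneg hπ.le (show (0:ℝ) ≤ p11 - p01 by linarith only [hB])
    have t2 := mul_nonneg hπ1.le (show (0:ℝ) ≤ p10 - p00 by linarith only [hC])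
    linarith only [t1, t2]
  have hst : (0:ℝ) ≤ p * (p11 - p10) + (1 - p) * (p01 - p00) := by
    have t1 := mul_nonneg hp.le (show (0:ℝ) ≤ p11 - p10 by linarith only [hA])
    have t2 := mul_nonneg hp1.le (show (0:ℝ) ≤ p01 - p00 by linarith only [hD])
    linarith only [t1, t2]
  have hpp : (0:ℝ) ≤ p * (1 - p) := mul_nonneg hp.le hp1.le
  have hππ : (0:ℝ) ≤ π * (1 - π) := mul_nonneg hπ.le hπ1.le
  -- rewriting E(Y | A = a) through the μ's
  have hEY1' : EY1 = (p * (π * p11 + (1 - π) * p10) * μ1 1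
      + (1 - p) * (π * p01 + (1 - π) * p00) * μ1 0) / f := by
    rw [hEY1, hμ1one, hμ1zero]
    congr 1
    field_simp
    ring
  have hEY0' : EY0 = (p * (π * (1 - p11) + (1 - π) * (1 - p10)) * μ0 1
      + (1 - p) * (π * (1 - p01) + (1 - π) * (1 - p00)) * μ0 0) / (1 - f) := by
    rw [hEY0, hμ0one, hμ0zero]
    congr 1
    field_simp
    ring
  -- (1) ACE1adj ≥ ACEunadj
  have e1 : ACE1adj - ACEunadj =
      (p * (π * (1 - p11) * m01 + (1 - π) * (1 - p10) * m00)
        + (1 - p) * (π * (1 - p01) * m01 + (1 - π) * (1 - p00) * m00)) / (1 - f)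
      - (p * (π * p11 + (1 - π) * p10)
          * ((π * (1 - p11) * m01 + (1 - π) * (1 - p10) * m00)
            / (π * (1 - p11) + (1 - π) * (1 - p10)))
        + (1 - p) * (π * p01 + (1 - π) * p00)
          * ((π * (1 - p01) * m01 + (1 - π) * (1 - p00) * m00)
            / (π * (1 - p01) + (1 - π) * (1 - p00)))) / f := by
    rw [hACE1adj, hACEunadj, hEY0, hμ0one, hμ0zero]
    ring
  rw [zbias_aux1 p (1 - p) (π * p11 + (1 - π) * p10) (π * p01 + (1 - π) * p00)
    (π * (1 - p11) + (1 - π) * (1 - p10)) (π * (1 - p01) + (1 - π) * (1 - p00))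
    (π * (1 - p11) * m01 + (1 - π) * (1 - p10) * m00)
    (π * (1 - p01) * m01 + (1 - π) * (1 - p00) * m00) f (1 - f)
    (by rw [hf]; ring) (by rw [hf]; ring) hf0.ne' h1f0.ne' hE1.ne' hE0.ne'] at e1
  have k1 : ACE1adj - ACEunadj =
      (p * (1 - p)) * ((π * (p11 - p01) + (1 - π) * (p10 - p00))
        * ((π * (1 - π)) * (((1 - p10) * (1 - p01) - (1 - p11) * (1 - p00)) * (m01 - m00))))
      / (f * (1 - f) * ((π * (1 - p11) + (1 - π) * (1 - p10))
          * (π * (1 - p01) + (1 - π) * (1 - p00)))) := by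
    rw [e1]; ring
  -- (2) ACE0adj ≥ ACEunadj
  have e2 : ACE0adj - ACEunadj =
      -((p * (π * p11 * m11 + (1 - π) * p10 * m10)
          + (1 - p) * (π * p01 * m11 + (1 - π) * p00 * m10)) / f
        - (p * (π * (1 - p11) + (1 - π) * (1 - p10))
            * ((π * p11 * m11 + (1 - π) * p10 * m10) / (π * p11 + (1 - π) * p10))
          + (1 - p) * (π * (1 - p01) + (1 - π) * (1 - p00))
            * ((π * p01 * m11 + (1 - π) * p00 * m10) / (π * p01 + (1 - π) * p00)))
          / (1 - f)) := by
    rw [hACE0adj, hACEunadj, hEY1, hμ1one, hμ1zero]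
    ring
  rw [zbias_aux1 p (1 - p) (π * (1 - p11) + (1 - π) * (1 - p10))
    (π * (1 - p01) + (1 - π) * (1 - p00)) (π * p11 + (1 - π) * p10)
    (π * p01 + (1 - π) * p00) (π * p11 * m11 + (1 - π) * p10 * m10)
    (π * p01 * m11 + (1 - π) * p00 * m10) (1 - f) f
    (by rw [hf]; ring) (by rw [hf]; ring) h1f0.ne' hf0.ne' hD1.ne' hD0.ne'] at e2
  have k2 : ACE0adj - ACEunadj =
      (p * (1 - p)) * ((π * (p11 - p01) + (1 - π) * (p10 - p00))
        * ((π * (1 - π)) * ((p01 * p10 - p11 * p00) * (m11 - m10))))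
      / (f * (1 - f) * ((π * p11 + (1 - π) * p10) * (π * p01 + (1 - π) * p00))) := by
    rw [e2]; ring
  -- (3) ACEadj ≥ ACEunadj
  have e3 : ACEadj - ACEunadj =
      ((p * μ1 1 + (1 - p) * μ1 0)
        - (p * (π * p11 + (1 - π) * p10) * μ1 1
          + (1 - p) * (π * p01 + (1 - π) * p00) * μ1 0) / f)
      - ((p * μ0 1 + (1 - p) * μ0 0)
        - (p * (π * (1 - p11) + (1 - π) * (1 - p10)) * μ0 1
          + (1 - p) * (π * (1 - p01) + (1 - π) * (1 - p00)) * μ0 0) / (1 - f)) := by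
    rw [hACEadj, hACEunadj, hEY1', hEY0']
    ring
  rw [zbias_aux2 p (1 - p) (π * p11 + (1 - π) * p10) (π * p01 + (1 - π) * p00)
      (μ1 1) (μ1 0) f (by ring) (by rw [hf]; ring) hf0.ne',
    zbias_aux2 p (1 - p) (π * (1 - p11) + (1 - π) * (1 - p10))
      (π * (1 - p01) + (1 - π) * (1 - p00)) (μ0 1) (μ0 0) (1 - f)
      (by ring) (by rw [hf]; ring) h1f0.ne'] at e3
  rw [hμ1one, hμ1zero, hμ0one, hμ0zero,
    div_sub_div _ _ hD1.ne' hD0.ne', div_sub_div _ _ hE1.ne' hE0.ne'] at e3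
  rw [show π * p01 + (1 - π) * p00 - (π * p11 + (1 - π) * p10)
        = -(π * (p11 - p01) + (1 - π) * (p10 - p00)) from by ring,
    show (π * p11 * m11 + (1 - π) * p10 * m10) * (π * p01 + (1 - π) * p00)
        - (π * p11 + (1 - π) * p10) * (π * p01 * m11 + (1 - π) * p00 * m10)
        = -((π * (1 - π)) * ((p01 * p10 - p11 * p00) * (m11 - m10))) from by ring,
    show π * (1 - p01) + (1 - π) * (1 - p00) - (π * (1 - p11) + (1 - π) * (1 - p10))
        = π * (p11 - p01) + (1 - π) * (p10 - p00) from by ring,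
    show (π * (1 - p11) * m01 + (1 - π) * (1 - p10) * m00)
          * (π * (1 - p01) + (1 - π) * (1 - p00))
        - (π * (1 - p11) + (1 - π) * (1 - p10))
          * (π * (1 - p01) * m01 + (1 - π) * (1 - p00) * m00)
        = -((π * (1 - π)) * (((1 - p10) * (1 - p01) - (1 - p11) * (1 - p00)) * (m01 - m00)))
      from by ring] at e3
  have k3 : ACEadj - ACEunadj =
      (p * (1 - p)) * ((π * (p11 - p01) + (1 - π) * (p10 - p00))
        * ((π * (1 - π)) * ((p01 * p10 - p11 * p00) * (m11 - m10))))
      / ((π * p11 + (1 - π) * p10) * (π * p01 + (1 - π) * p00)) / f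
      + (p * (1 - p)) * ((π * (p11 - p01) + (1 - π) * (p10 - p00))
        * ((π * (1 - π)) * (((1 - p10) * (1 - p01) - (1 - p11) * (1 - p00)) * (m01 - m00))))
      / ((π * (1 - p11) + (1 - π) * (1 - p10))
          * (π * (1 - p01) + (1 - π) * (1 - p00))) / (1 - f) := by
    rw [e3]; ring
  -- (4) ACEunadj ≥ ACE1true
  have e4 : ACEunadj - ACE1true =
      ((π * m01 + (1 - π) * m00)
        - (π * (1 - (p * p11 + (1 - p) * p01)) * m01
          + (1 - π) * (1 - (p * p10 + (1 - p) * p00)) * m00) / (1 - f))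
      - ((π * m01 + (1 - π) * m00)
        - (π * (p * p11 + (1 - p) * p01) * m01
          + (1 - π) * (p * p10 + (1 - p) * p00) * m00) / f) := by
    rw [hACE1true, hACEunadj, hEY0]
    ring
  rw [zbias_aux2 π (1 - π) (1 - (p * p11 + (1 - p) * p01)) (1 - (p * p10 + (1 - p) * p00))
      m01 m00 (1 - f) (by ring) (by rw [hf]; ring) h1f0.ne',
    zbias_aux2 π (1 - π) (p * p11 + (1 - p) * p01) (p * p10 + (1 - p) * p00)
      m01 m00 f (by ring) (by rw [hf]; ring) hf0.ne'] at e4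
  have k4 : ACEunadj - ACE1true =
      (π * (1 - π)) * ((p * (p11 - p10) + (1 - p) * (p01 - p00)) * (m01 - m00)) / (1 - f)
      + (π * (1 - π)) * ((p * (p11 - p10) + (1 - p) * (p01 - p00)) * (m01 - m00)) / f := by
    rw [e4]; ring
  -- (5) ACEunadj ≥ ACE0true
  have e5 : ACEunadj - ACE0true =
      ((π * m11 + (1 - π) * m10)
        - (π * (1 - (p * p11 + (1 - p) * p01)) * m11
          + (1 - π) * (1 - (p * p10 + (1 - p) * p00)) * m10) / (1 - f))
      - ((π * m11 + (1 - π) * m10)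
        - (π * (p * p11 + (1 - p) * p01) * m11
          + (1 - π) * (p * p10 + (1 - p) * p00) * m10) / f) := by
    rw [hACE0true, hACEunadj, hEY1]
    ring
  rw [zbias_aux2 π (1 - π) (1 - (p * p11 + (1 - p) * p01)) (1 - (p * p10 + (1 - p) * p00))
      m11 m10 (1 - f) (by ring) (by rw [hf]; ring) h1f0.ne',
    zbias_aux2 π (1 - π) (p * p11 + (1 - p) * p01) (p * p10 + (1 - p) * p00)
      m11 m10 f (by ring) (by rw [hf]; ring) hf0.ne'] at e5
  have k5 : ACEunadj - ACE0true =
      (π * (1 - π)) * ((p * (p11 - p10) + (1 - p) * (p01 - p00)) * (m11 - m10)) / (1 - f)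
      + (π * (1 - π)) * ((p * (p11 - p10) + (1 - p) * (p01 - p00)) * (m11 - m10)) / f := by
    rw [e5]; ring
  -- (6) ACEunadj ≥ ACEtrue
  have e6 : ACEunadj - ACEtrue =
      ((π * m01 + (1 - π) * m00)
        - (π * (1 - (p * p11 + (1 - p) * p01)) * m01
          + (1 - π) * (1 - (p * p10 + (1 - p) * p00)) * m00) / (1 - f))
      - ((π * m11 + (1 - π) * m10)
        - (π * (p * p11 + (1 - p) * p01) * m11
          + (1 - π) * (p * p10 + (1 - p) * p00) * m10) / f) := by
    rw [hACEunadj, hACEtrue, hEY1, hEY0]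
    ring
  rw [zbias_aux2 π (1 - π) (1 - (p * p11 + (1 - p) * p01)) (1 - (p * p10 + (1 - p) * p00))
      m01 m00 (1 - f) (by ring) (by rw [hf]; ring) h1f0.ne',
    zbias_aux2 π (1 - π) (p * p11 + (1 - p) * p01) (p * p10 + (1 - p) * p00)
      m11 m10 f (by ring) (by rw [hf]; ring) hf0.ne'] at e6
  have k6 : ACEunadj - ACEtrue =
      (π * (1 - π)) * ((p * (p11 - p10) + (1 - p) * (p01 - p00)) * (m01 - m00)) / (1 - f)
      + (π * (1 - π)) * ((p * (p11 - p10) + (1 - p) * (p01 - p00)) * (m11 - m10)) / f := by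
    rw [e6]; ring
  refine ⟨⟨?_, ?_⟩, ⟨?_, ?_⟩, ?_, ?_⟩
  · rw [ge_iff_le, ← sub_nonneg, k1]
    exact div_nonneg
      (mul_nonneg hpp (mul_nonneg hDd (mul_nonneg hππ (mul_nonneg hW2' hm0))))
      (mul_pos (mul_pos hf0 h1f0) (mul_pos hE1 hE0)).le
  · rw [ge_iff_le, ← sub_nonneg, k4]
    exact add_nonneg
      (div_nonneg (mul_nonneg hππ (mul_nonneg hst hm0)) h1f0.le)
      (div_nonneg (mul_nonneg hππ (mul_nonneg hst hm0)) hf0.le)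
  · rw [ge_iff_le, ← sub_nonneg, k2]
    exact div_nonneg
      (mul_nonneg hpp (mul_nonneg hDd (mul_nonneg hππ (mul_nonneg hW1' hm1))))
      (mul_pos (mul_pos hf0 h1f0) (mul_pos hD1 hD0)).le
  · rw [ge_iff_le, ← sub_nonneg, k5]
    exact add_nonneg
      (div_nonneg (mul_nonneg hππ (mul_nonneg hst hm1)) h1f0.le)
      (div_nonneg (mul_nonneg hππ (mul_nonneg hst hm1)) hf0.le)
  · rw [ge_iff_le, ← sub_nonneg, k3]
    exact add_nonneg
      (div_nonneg (div_nonneg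
        (mul_nonneg hpp (mul_nonneg hDd (mul_nonneg hππ (mul_nonneg hW1' hm1))))
        (mul_pos hD1 hD0).le) hf0.le)
      (div_nonneg (div_nonneg
        (mul_nonneg hpp (mul_nonneg hDd (mul_nonneg hππ (mul_nonneg hW2' hm0))))
        (mul_pos hE1 hE0).le) h1f0.le)
  · rw [ge_iff_le, ← sub_nonneg, k6]
    exact add_nonneg
      (div_nonneg (mul_nonneg hππ (mul_nonneg hst hm0)) h1f0.le)
      (div_nonneg (mul_nonneg hππ (mul_nonneg hst hm1)) hf0.le)
end

section
/- Theorem 4 (Z-Bias with a general propensity score, weak conditions). Let Π : Ω → [0,1] be a random variable with E[1_{A=1} | σ(Π)] = Π almost surely (a propensity score). Assume: (i) for a = 0,1 there exists a non-decreasing measurable function e_a : ℝ → ℝ with e_a(Y_a) = E[1_{A=1} | σ(Y_a)] almost surely; (ii) for a = 0,1 there exist versions ν_a of E(Y | A=a, Π) with ν_a(Π) and Π·ν_a(Π) integrable and cov(Π, ν_a(Π)) := E[Π·ν_a(Π)] − E[Π]·E[ν_a(Π)] ≤ 0. Then ACE_1^adj ≥ ACE_unadj ≥ ACE_1^true, ACE_0^adj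 ≥ ACE_unadj ≥ ACE_0^true, and ACE_adj ≥ ACE_unadj ≥ ACE_true, where ACE_1^adj := E(Y | A=1) − E(ν_0(Π) | A=1), ACE_0^adj := E(ν_1(Π) | A=0) − E(Y | A=0), and ACE_adj := E[ν_1(Π)] − E[ν_0(Π)]. -/
open MeasureTheory ProbabilityTheory Set

/-- Conditional expectation of `W` given the event `E`: `E(W | E) = E[W·1_E]/P(E)`. -/
noncomputable def cE {Ω : Type*} [MeasurableSpace Ω] (P : Measure Ω) (W : Ω → ℝ) (E : Set Ω) : ℝ :=
  (∫ ω in E, W ω ∂P) / (P E).toReal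

/-- The indicator `1_{A = a}` as a real-valued function. -/
noncomputable def indic {Ω : Type*} (A : Ω → ℝ) (a : ℝ) : Ω → ℝ :=
  Set.indicator {ω | A ω = a} (fun _ => (1 : ℝ))

/-- The σ-algebra generated by a random element `V`. -/
def sigmaOf {Ω α : Type*} [MeasurableSpace α] (V : Ω → α) : MeasurableSpace Ω :=
  MeasurableSpace.comap V inferInstance

/-!
Write `S = {A = 1}`. If an integrable `X` satisfies `∫_S X ≤ P(S) · E X`, then comparing the
averages of `X` over `S`, `Ω` and `Sᶜ` gives `E(X | S) ≤ E X ≤ E(X | Sᶜ)`; the reverse inequality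
gives the reverse chain. By the tower property `E(Y | A = a) = E(ν_a(Π) | A = a)`, and
`∫_S ν_a(Π) = E[Π ν_a(Π)] ≤ E Π · E ν_a(Π) = P(S) · E ν_a(Π)` by the covariance assumption, so each
`ν_a(Π)` satisfies the first chain. On the other hand `∫_S Y_a = E[Y_a e_a(Y_a)]
≥ E Y_a · E e_a(Y_a) = P(S) · E Y_a` because `e_a` is non-decreasing, so each `Y_a` satisfies the
reversed chain. Since `Y = Y_a` on `{A = a}`, the six inequalities are combinations of these chains.
-/

section CondExp

variable {Ω : Type*} {m mΩ : MeasurableSpace Ω} {μ : Measure[mΩ] Ω} {S : Set Ω} {g Y π : Ω → ℝ}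

lemma setIntegral_eq_integral_mul_condExp_indicator [IsFiniteMeasure μ] (hm : m ≤ mΩ)
    (hS : MeasurableSet S) (hg : StronglyMeasurable[m] g) (hgi : Integrable g μ) :
    ∫ ω in S, g ω ∂μ = ∫ ω, g ω * μ[S.indicator 1 | m] ω ∂μ := by
  have hmul : g * S.indicator 1 = S.indicator g := by
    ext ω
    simp only [Pi.mul_apply, ← Set.indicator_mul_right, Pi.one_apply, mul_one]
  have hpull := condExp_mul_of_stronglyMeasurable_left (m := m) hg
    (hmul ▸ hgi.indicator hS) ((integrable_const 1).indicator hS)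
  rw [← integral_indicator hS, ← hmul, ← integral_condExp hm]
  exact integral_congr_ae hpull

lemma setIntegral_eq_setIntegral_of_condExp_version [IsFiniteMeasure μ] (hm : m ≤ mΩ)
    (hS : MeasurableSet S) (hg : StronglyMeasurable[m] g) (hgi : Integrable g μ)
    (hver : ∀ᵐ ω ∂μ, g ω * μ[S.indicator 1 | m] ω = μ[fun ω ↦ Y ω * S.indicator 1 ω | m] ω) :
    ∫ ω in S, Y ω ∂μ = ∫ ω in S, g ω ∂μ := by
  have hmul : (fun ω ↦ Y ω * S.indicator 1 ω) = S.indicator Y := by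
    ext ω
    simp only [← Set.indicator_mul_right, Pi.one_apply, mul_one]
  rw [setIntegral_eq_integral_mul_condExp_indicator hm hS hg hgi, ← integral_indicator hS,
    ← hmul, ← integral_condExp hm]
  exact integral_congr_ae (hver.mono fun _ h ↦ h.symm)

lemma setIntegral_le_measureReal_mul_integral_of_cov_nonpos [IsFiniteMeasure μ] (hm : m ≤ mΩ)
    (hS : MeasurableSet S) (hπ : μ[S.indicator 1 | m] =ᵐ[μ] π)
    (hg : StronglyMeasurable[m] g) (hgi : Integrable g μ)
    (hcov : (∫ ω, π ω * g ω ∂μ) - (∫ ω, π ω ∂μ) * (∫ ω, g ω ∂μ) ≤ 0) :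
    ∫ ω in S, g ω ∂μ ≤ μ.real S * ∫ ω, g ω ∂μ := by
  have hgπ : ∫ ω in S, g ω ∂μ = ∫ ω, π ω * g ω ∂μ := by
    rw [setIntegral_eq_integral_mul_condExp_indicator hm hS hg hgi]
    exact integral_congr_ae (hπ.mono fun ω h ↦ by dsimp only; rw [h, mul_comm])
  have hπS : ∫ ω, π ω ∂μ = μ.real S := by
    rw [← integral_congr_ae hπ, integral_condExp hm, integral_indicator_one hS]
  rw [hgπ, ← hπS]
  linarith

end CondExp

lemma integral_mul_integral_le_integral_mul_of_monotone {Ω : Type*} [MeasurableSpace Ω]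
    {μ : Measure Ω} [IsProbabilityMeasure μ] {X : Ω → ℝ} {e : ℝ → ℝ} (he : Monotone e)
    (hX : Integrable X μ) (heX : Integrable (fun ω ↦ e (X ω)) μ)
    (hXeX : Integrable (fun ω ↦ X ω * e (X ω)) μ) :
    (∫ ω, X ω ∂μ) * (∫ ω, e (X ω) ∂μ) ≤ ∫ ω, X ω * e (X ω) ∂μ := by
  set x := ∫ ω, X ω ∂μ
  -- `X - x` and `e ∘ X - e x` have the same sign everywhere.
  have hpos : 0 ≤ ∫ ω, (X ω - x) * (e (X ω) - e x) ∂μ := by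
    refine integral_nonneg fun ω ↦ ?_
    rcases le_total (X ω) x with h | h
    · exact mul_nonneg_of_nonpos_of_nonpos (by linarith) (by linarith [he h])
    · exact mul_nonneg (by linarith) (by linarith [he h])
  have hexpand : ∫ ω, (X ω - x) * (e (X ω) - e x) ∂μ
      = (∫ ω, X ω * e (X ω) ∂μ) - x * (∫ ω, e (X ω) ∂μ) - e x * x + x * e x := by
    have hfun : (fun ω ↦ (X ω - x) * (e (X ω) - e x))
        = fun ω ↦ (X ω * e (X ω) - x * e (X ω)) - (e x * X ω - x * e x) := by
      ext ω; ring
    have h1 : Integrable (fun ω ↦ X ω * e (X ω) - x * e (X ω)) μ := hXeX.sub (heX.const_mul x)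
    have h2 : Integrable (fun ω ↦ e x * X ω - x * e x) μ :=
      (hX.const_mul _).sub (integrable_const _)
    rw [hfun, integral_sub h1 h2, integral_sub hXeX (heX.const_mul x),
      integral_sub (hX.const_mul _) (integrable_const _), integral_const_mul, integral_const_mul, integral_const, probReal_univ, one_smul]
    ring
  linarith

lemma measureReal_mul_integral_le_setIntegral_of_monotone {Ω : Type*} [MeasurableSpace Ω]
    {μ : Measure Ω} [IsProbabilityMeasure μ] {S : Set Ω} {X : Ω → ℝ} {e : ℝ → ℝ}
    (hS : MeasurableSet S) (hXm : Measurable X) (hX : Integrable X μ) (he : Monotone e)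
    (hver : ∀ᵐ ω ∂μ, e (X ω) = μ[S.indicator 1 | sigmaOf X] ω) :
    μ.real S * ∫ ω, X ω ∂μ ≤ ∫ ω in S, X ω ∂μ := by
  have hm : sigmaOf X ≤ ‹MeasurableSpace Ω› := hXm.comap_le
  have hbdd : ∀ᵐ ω ∂μ, ‖e (X ω)‖ ≤ 1 := by
    have hind : ∀ᵐ ω ∂μ, |S.indicator (1 : Ω → ℝ) ω| ≤ 1 :=
      ae_of_all _ fun ω ↦ by by_cases h : ω ∈ S <;> simp [h]
    filter_upwards [ae_bdd_abs_condExp_of_ae_bdd_abs (m := sigmaOf X) hind, hver] with ω h h'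
    rwa [Real.norm_eq_abs, h']
  have heX : Integrable (fun ω ↦ e (X ω)) μ := integrable_condExp.congr (hver.mono fun _ h ↦ h.symm)
  have hset : ∫ ω in S, X ω ∂μ = ∫ ω, X ω * e (X ω) ∂μ := by
    rw [setIntegral_eq_integral_mul_condExp_indicator hm hS
      (comap_measurable X).stronglyMeasurable hX]
    exact integral_congr_ae (hver.mono fun ω h ↦ by dsimp only; rw [h])
  have heS : ∫ ω, e (X ω) ∂μ = μ.real S := by
    rw [integral_congr_ae hver, integral_condExp hm, integral_indicator_one hS]
  have := integral_mul_integral_le_integral_mul_of_monotone he hX heX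
    (hX.mul_bdd heX.aestronglyMeasurable hbdd)
  rw [hset, ← heS]
  linarith

section ConditionalMean

variable {Ω : Type*} [MeasurableSpace Ω] {μ : Measure Ω} [IsProbabilityMeasure μ] {S : Set Ω}
  {X : Ω → ℝ}

lemma cE_le_integral_le_cE_compl (hS : MeasurableSet S) (hS0 : 0 < μ.real S)
    (hS1 : μ.real S < 1) (hX : Integrable X μ) (h : ∫ ω in S, X ω ∂μ ≤ μ.real S * ∫ ω, X ω ∂μ) :
    cE μ X S ≤ ∫ ω, X ω ∂μ ∧ ∫ ω, X ω ∂μ ≤ cE μ X Sᶜ := by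
  have hsplit := integral_add_compl hS hX
  rw [cE, cE, ← measureReal_def, ← measureReal_def, probReal_compl_eq_one_sub hS,
    div_le_iff₀ hS0, le_div_iff₀ (by linarith)]
  constructor <;> linarith

lemma cE_compl_le_integral_le_cE (hS : MeasurableSet S) (hS0 : 0 < μ.real S)
    (hS1 : μ.real S < 1) (hX : Integrable X μ) (h : μ.real S * ∫ ω, X ω ∂μ ≤ ∫ ω in S, X ω ∂μ) :
    cE μ X Sᶜ ≤ ∫ ω, X ω ∂μ ∧ ∫ ω, X ω ∂μ ≤ cE μ X S := by
  have hsplit := integral_add_compl hS hX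
  have hc := probReal_compl_eq_one_sub (μ := μ) hS
  simpa only [compl_compl] using cE_le_integral_le_cE_compl hS.compl (by linarith) (by linarith)
    hX (by rw [hc]; linarith)

end ConditionalMean

theorem zbias_general_weak_general
    {Ω : Type*} [MeasurableSpace Ω] (P : Measure Ω) [IsProbabilityMeasure P]
    (A Y1 Y0 : Ω → ℝ)
    (hAmeas : Measurable A) (hAbin : ∀ ω, A ω = 0 ∨ A ω = 1)
    (hY1int : Integrable Y1 P) (hY0int : Integrable Y0 P)
    (hY1meas : Measurable Y1) (hY0meas : Measurable Y0)
    (Y : Ω → ℝ) (hYdef : ∀ ω, Y ω = A ω * Y1 ω + (1 - A ω) * Y0 ω)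
    (hf0 : 0 < (P {ω | A ω = 1}).toReal) (hf1 : (P {ω | A ω = 1}).toReal < 1)
    -- Π is a propensity score taking values in [0, 1]
    (Pi : Ω → ℝ) (hPiMeas : Measurable Pi)
    (hPiScore : ∀ᵐ ω ∂P, (P[indic A 1 | sigmaOf Pi]) ω = Pi ω)
    -- (i) non-decreasing versions of P(A=1 | Y_a)
    (e1 e0 : ℝ → ℝ)
    (he1Mono : Monotone e1) (he0Mono : Monotone e0)
    (he1Ver : ∀ᵐ ω ∂P, e1 (Y1 ω) = (P[indic A 1 | sigmaOf Y1]) ω)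
    (he0Ver : ∀ᵐ ω ∂P, e0 (Y0 ω) = (P[indic A 1 | sigmaOf Y0]) ω)
    -- (ii) versions of E(Y | A=a, Π) with non-positive covariance with Π
    (ν1 ν0 : ℝ → ℝ) (hν1Meas : Measurable ν1) (hν0Meas : Measurable ν0)
    (hν1Ver : ∀ᵐ ω ∂P, ν1 (Pi ω) * (P[indic A 1 | sigmaOf Pi]) ω
      = (P[fun ω' => Y ω' * indic A 1 ω' | sigmaOf Pi]) ω)
    (hν0Ver : ∀ᵐ ω ∂P, ν0 (Pi ω) * (P[indic A 0 | sigmaOf Pi]) ω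
      = (P[fun ω' => Y ω' * indic A 0 ω' | sigmaOf Pi]) ω)
    (hν1Int : Integrable (fun ω => ν1 (Pi ω)) P)
    (hν0Int : Integrable (fun ω => ν0 (Pi ω)) P)
    (hcov1 : (∫ ω, Pi ω * ν1 (Pi ω) ∂P) - (∫ ω, Pi ω ∂P) * (∫ ω, ν1 (Pi ω) ∂P) ≤ 0)
    (hcov0 : (∫ ω, Pi ω * ν0 (Pi ω) ∂P) - (∫ ω, Pi ω ∂P) * (∫ ω, ν0 (Pi ω) ∂P) ≤ 0) :
    -- ACE_1^adj ≥ ACE_unadj ≥ ACE_1^true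
    (cE P Y {ω | A ω = 1} - cE P (fun ω => ν0 (Pi ω)) {ω | A ω = 1}
      ≥ cE P Y {ω | A ω = 1} - cE P Y {ω | A ω = 0}) ∧
    (cE P Y {ω | A ω = 1} - cE P Y {ω | A ω = 0}
      ≥ cE P Y {ω | A ω = 1} - cE P Y0 {ω | A ω = 1}) ∧
    -- ACE_0^adj ≥ ACE_unadj ≥ ACE_0^true
    (cE P (fun ω => ν1 (Pi ω)) {ω | A ω = 0} - cE P Y {ω | A ω = 0}
      ≥ cE P Y {ω | A ω = 1} - cE P Y {ω | A ω = 0}) ∧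
    (cE P Y {ω | A ω = 1} - cE P Y {ω | A ω = 0}
      ≥ cE P Y1 {ω | A ω = 0} - cE P Y {ω | A ω = 0}) ∧
    -- ACE^adj ≥ ACE_unadj ≥ ACE^true
    ((∫ ω, ν1 (Pi ω) ∂P) - (∫ ω, ν0 (Pi ω) ∂P)
      ≥ cE P Y {ω | A ω = 1} - cE P Y {ω | A ω = 0}) ∧
    (cE P Y {ω | A ω = 1} - cE P Y {ω | A ω = 0}
      ≥ (∫ ω, Y1 ω ∂P) - (∫ ω, Y0 ω ∂P)) := by
  set S := {ω | A ω = 1}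
  have hS : MeasurableSet S := hAmeas (measurableSet_singleton 1)
  have hA0 : MeasurableSet {ω | A ω = 0} := hAmeas (measurableSet_singleton 0)
  have hS0 : {ω | A ω = 0} = Sᶜ := by ext ω; rcases hAbin ω with h | h <;> simp [S, h]
  have hmPi : sigmaOf Pi ≤ ‹MeasurableSpace Ω› := hPiMeas.comap_le
  have hν1m : StronglyMeasurable[sigmaOf Pi] (fun ω ↦ ν1 (Pi ω)) :=
    (hν1Meas.comp (comap_measurable Pi)).stronglyMeasurable
  have hν0m : StronglyMeasurable[sigmaOf Pi] (fun ω ↦ ν0 (Pi ω)) :=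
    (hν0Meas.comp (comap_measurable Pi)).stronglyMeasurable
  have hY_S : cE P Y S = cE P Y1 S := by
    unfold cE; congr 1
    exact setIntegral_congr_fun hS fun ω (h : A ω = 1) ↦ by rw [hYdef, h]; ring
  have hY_Sc : cE P Y Sᶜ = cE P Y0 Sᶜ := by
    unfold cE; rw [← hS0]; congr 1
    exact setIntegral_congr_fun hA0 fun ω (h : A ω = 0) ↦ by rw [hYdef, h]; ring
  have hν1_S : cE P Y S = cE P (fun ω ↦ ν1 (Pi ω)) S := by
    unfold cE; congr 1
    exact setIntegral_eq_setIntegral_of_condExp_version hmPi hS hν1m hν1Int hν1Ver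
  have hν0_Sc : cE P Y Sᶜ = cE P (fun ω ↦ ν0 (Pi ω)) Sᶜ := by
    unfold cE; rw [← hS0]; congr 1
    exact setIntegral_eq_setIntegral_of_condExp_version hmPi hA0 hν0m hν0Int hν0Ver
  have hν1 := cE_le_integral_le_cE_compl hS hf0 hf1 hν1Int
    (setIntegral_le_measureReal_mul_integral_of_cov_nonpos hmPi hS hPiScore hν1m hν1Int hcov1)
  have hν0 := cE_le_integral_le_cE_compl hS hf0 hf1 hν0Int
    (setIntegral_le_measureReal_mul_integral_of_cov_nonpos hmPi hS hPiScore hν0m hν0Int hcov0)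
  have hY1 := cE_compl_le_integral_le_cE hS hf0 hf1 hY1int
    (measureReal_mul_integral_le_setIntegral_of_monotone hS hY1meas hY1int he1Mono he1Ver)
  have hY0 := cE_compl_le_integral_le_cE hS hf0 hf1 hY0int
    (measureReal_mul_integral_le_setIntegral_of_monotone hS hY0meas hY0int he0Mono he0Ver)
  rw [hS0]
  refine ⟨?_, ?_, ?_, ?_, ?_, ?_⟩ <;>
    linarith [hν1.1, hν1.2, hν0.1, hν0.2, hY1.1, hY1.2, hY0.1, hY0.2]

/-- Theorem 4: Z-Bias with a general propensity score, weak conditions. -/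
theorem zbias_general_weak
    {Ω : Type*} [MeasurableSpace Ω] (P : Measure Ω) [IsProbabilityMeasure P]
    (A Y1 Y0 : Ω → ℝ)
    (hAmeas : Measurable A) (hAbin : ∀ ω, A ω = 0 ∨ A ω = 1)
    (hY1int : Integrable Y1 P) (hY0int : Integrable Y0 P)
    (hY1meas : Measurable Y1) (hY0meas : Measurable Y0)
    (Y : Ω → ℝ) (hYdef : ∀ ω, Y ω = A ω * Y1 ω + (1 - A ω) * Y0 ω)
    (hYint : Integrable Y P)
    (hf0 : 0 < (P {ω | A ω = 1}).toReal) (hf1 : (P {ω | A ω = 1}).toReal < 1)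
    -- Π is a propensity score taking values in [0, 1]
    (Pi : Ω → ℝ) (hPiMeas : Measurable Pi) (hPiRange : ∀ ω, Pi ω ∈ Set.Icc (0:ℝ) 1)
    (hPiScore : ∀ᵐ ω ∂P, (P[indic A 1 | sigmaOf Pi]) ω = Pi ω)
    -- (i) non-decreasing versions of P(A=1 | Y_a)
    (e1 e0 : ℝ → ℝ) (he1Meas : Measurable e1) (he0Meas : Measurable e0)
    (he1Mono : Monotone e1) (he0Mono : Monotone e0)
    (he1Ver : ∀ᵐ ω ∂P, e1 (Y1 ω) = (P[indic A 1 | sigmaOf Y1]) ω)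
    (he0Ver : ∀ᵐ ω ∂P, e0 (Y0 ω) = (P[indic A 1 | sigmaOf Y0]) ω)
    -- (ii) versions of E(Y | A=a, Π) with non-positive covariance with Π
    (ν1 ν0 : ℝ → ℝ) (hν1Meas : Measurable ν1) (hν0Meas : Measurable ν0)
    (hν1Ver : ∀ᵐ ω ∂P, ν1 (Pi ω) * (P[indic A 1 | sigmaOf Pi]) ω
      = (P[fun ω' => Y ω' * indic A 1 ω' | sigmaOf Pi]) ω)
    (hν0Ver : ∀ᵐ ω ∂P, ν0 (Pi ω) * (P[indic A 0 | sigmaOf Pi]) ω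
      = (P[fun ω' => Y ω' * indic A 0 ω' | sigmaOf Pi]) ω)
    (hν1Int : Integrable (fun ω => ν1 (Pi ω)) P)
    (hν0Int : Integrable (fun ω => ν0 (Pi ω)) P)
    (hPiν1Int : Integrable (fun ω => Pi ω * ν1 (Pi ω)) P)
    (hPiν0Int : Integrable (fun ω => Pi ω * ν0 (Pi ω)) P)
    (hcov1 : (∫ ω, Pi ω * ν1 (Pi ω) ∂P) - (∫ ω, Pi ω ∂P) * (∫ ω, ν1 (Pi ω) ∂P) ≤ 0)
    (hcov0 : (∫ ω, Pi ω * ν0 (Pi ω) ∂P) - (∫ ω, Pi ω ∂P) * (∫ ω, ν0 (Pi ω) ∂P) ≤ 0) :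
    -- ACE_1^adj ≥ ACE_unadj ≥ ACE_1^true
    (cE P Y {ω | A ω = 1} - cE P (fun ω => ν0 (Pi ω)) {ω | A ω = 1}
      ≥ cE P Y {ω | A ω = 1} - cE P Y {ω | A ω = 0}) ∧
    (cE P Y {ω | A ω = 1} - cE P Y {ω | A ω = 0}
      ≥ cE P Y {ω | A ω = 1} - cE P Y0 {ω | A ω = 1}) ∧
    -- ACE_0^adj ≥ ACE_unadj ≥ ACE_0^true
    (cE P (fun ω => ν1 (Pi ω)) {ω | A ω = 0} - cE P Y {ω | A ω = 0}
      ≥ cE P Y {ω | A ω = 1} - cE P Y {ω | A ω = 0}) ∧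
    (cE P Y {ω | A ω = 1} - cE P Y {ω | A ω = 0}
      ≥ cE P Y1 {ω | A ω = 0} - cE P Y {ω | A ω = 0}) ∧
    -- ACE^adj ≥ ACE_unadj ≥ ACE^true
    ((∫ ω, ν1 (Pi ω) ∂P) - (∫ ω, ν0 (Pi ω) ∂P)
      ≥ cE P Y {ω | A ω = 1} - cE P Y {ω | A ω = 0}) ∧
    (cE P Y {ω | A ω = 1} - cE P Y {ω | A ω = 0}
      ≥ (∫ ω, Y1 ω ∂P) - (∫ ω, Y0 ω ∂P)) :=
  zbias_general_weak_general P A Y1 Y0 hAmeas hAbin hY1int hY0int hY1meas hY0meas Y hYdef hf0 hf1 Pi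
    hPiMeas hPiScore e1 e0 he1Mono he0Mono he1Ver he0Ver ν1 ν0 hν1Meas hν0Meas hν1Ver hν0Ver hν1Int
    hν0Int hcov1 hcov0
end

section
/- Lemma S5 (no additive interaction plus monotonicity implies non-positive multiplicative interactions). Let p11, p10, p01, p00 be real numbers with 0 < p00, p11 ≤ 1, p11 ≥ max(p10, p01), min(p10, p01) ≥ p00, and p11 − p10 − p01 + p00 = 0. Then p11·p00 ≤ p10·p01 and (1 − p11)·(1 − p00) ≤ (1 − p10)·(1 − p01). -/
/-- Lemma S5: no additive interaction plus monotonicity implies non-positive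
multiplicative interactions for both the presence and absence of treatment. -/
theorem no_additive_interaction_implies_multiplicative
    (p11 p10 p01 p00 : ℝ)
    (h00pos : 0 < p00) (h11le : p11 ≤ 1)
    (hMono1 : p11 ≥ max p10 p01) (hMono2 : min p10 p01 ≥ p00)
    (hNoAdd : p11 - p10 - p01 + p00 = 0) :
    p11 * p00 ≤ p10 * p01 ∧ (1 - p11) * (1 - p00) ≤ (1 - p10) * (1 - p01) := by
  have h1 : p10 ≥ p00 := le_trans hMono2 (min_le_left _ _)
  have h2 : p01 ≥ p00 := le_trans hMono2 (min_le_right _ _)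
  have h3 : p11 ≥ p10 := le_trans (le_max_left _ _) hMono1
  have h4 : p11 ≥ p01 := le_trans (le_max_right _ _) hMono1
  constructor
  · nlinarith [mul_nonneg (sub_nonneg.2 h1) (sub_nonneg.2 h2)]
  · nlinarith [mul_nonneg (sub_nonneg.2 h3) (sub_nonneg.2 h4)]
end

section
/- Lemma S7 (no multiplicative interaction plus monotonicity implies non-negative additive interaction and non-positive multiplicative interaction for the absence of treatment). Let p11, p10, p01, p00 be real numbers with 0 < p00, p11 ≤ 1, p11 ≥ max(p10, p01), min(p10, p01) ≥ p00, and p11·p00 = p10·p01. Then p11 − p10 − p01 + p00 ≥ 0 and (1 − p11)·(1 − p00) ≤ (1 − p10)·(1 − p01). -/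
/-- Lemma S7: no multiplicative interaction plus monotonicity implies
non-negative additive interaction and non-positive multiplicative interaction
for the absence of treatment. -/
theorem no_multiplicative_interaction_implies
    (p11 p10 p01 p00 : ℝ)
    (h00pos : 0 < p00) (h11le : p11 ≤ 1)
    (hMono1 : p11 ≥ max p10 p01) (hMono2 : min p10 p01 ≥ p00)
    (hNoMul : p11 * p00 = p10 * p01) :
    p11 - p10 - p01 + p00 ≥ 0 ∧ (1 - p11) * (1 - p00) ≤ (1 - p10) * (1 - p01) := by
  have h1 : p11 ≥ p10 := le_trans (le_max_left _ _) hMono1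
  have h2 : p11 ≥ p01 := le_trans (le_max_right _ _) hMono1
  have h3 : p10 ≥ p00 := le_trans hMono2 (min_le_left _ _)
  have hpos : 0 < p11 := lt_of_lt_of_le h00pos (le_trans h3 h1)
  have key : p11 - p10 - p01 + p00 ≥ 0 := by
    nlinarith [mul_nonneg (sub_nonneg.2 h1) (sub_nonneg.2 h2)]
  exact ⟨key, by nlinarith⟩
end

section
/- Core inequality in Lemma S6 (additive model induces negative conditional association). Let μ be a Borel probability measure on ℝ, let u ∈ ℝ satisfy 0 < μ((−∞, u]) < 1, let γ : ℝ → ℝ be a non-decreasing measurable μ-integrable function, and let β0 ≤ β1 be reals such that 0 < β0 + γ(u') and β1 + γ(u') < 1 for μ-almost every u'. Define p11 := β1 + (∫_{(u,∞)} γ dμ)/μ((u,∞)), p10 := β0 + (∫_{(u,∞)} γ dμ)/μ((u,∞)), p01 := β1 + (∫_{(−∞,u]} γ dμ)/μ((−∞,u]), p00 := β0 + (∫_{(−∞,u]} γ dμ)/μ((−∞,u]). Then p11·p00 ≤ p10·p01 and (1 − p11)·(1 − p00) ≤ (1 − p10)·(1 − p01). -/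
open MeasureTheory Set

/-!
A monotone γ has a smaller mean on `{U ≤ u}` than on `{U > u}`: by the first moment method the
first mean is at most `γ x` for some `x ≤ u`, and the second at least `γ y` for some `y > u`. With `m₀ ≤ m₁` these two
means, both conclusions are the two-term rearrangement inequality
`(x₁ + y₁) (x₀ + y₀) ≤ (x₀ + y₁) (x₁ + y₀)` for `x₀ ≤ x₁`, `y₀ ≤ y₁`: once with
`x = β`, `y = m`, and once with `x = 1 - β`, `y = -m` (both orders reversed).
-/

theorem add_mul_add_le_add_mul_add {R : Type*} [CommRing R] [PartialOrder R] [IsOrderedRing R]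
    {x₀ x₁ y₀ y₁ : R} (hx : x₀ ≤ x₁) (hy : y₀ ≤ y₁) :
    (x₁ + y₁) * (x₀ + y₀) ≤ (x₀ + y₁) * (x₁ + y₀) := by
  linear_combination mul_nonneg (sub_nonneg.2 hx) (sub_nonneg.2 hy)

theorem Monotone.setAverage_le_setAverage {α : Type*} [MeasurableSpace α] [Preorder α]
    {μ : Measure α} {f : α → ℝ} (hf : Monotone f) {s t : Set α}
    (hst : ∀ x ∈ s, ∀ y ∈ t, x ≤ y) (hs₀ : μ s ≠ 0) (hs : μ s ≠ ⊤) (ht₀ : μ t ≠ 0)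
    (ht : μ t ≠ ⊤) (hfs : IntegrableOn f s μ) (hft : IntegrableOn f t μ) :
    ⨍ x in s, f x ∂μ ≤ ⨍ x in t, f x ∂μ := by
  obtain ⟨x, hx, hfx⟩ := exists_setAverage_le hs₀ hs hfs
  obtain ⟨y, hy, hfy⟩ := exists_le_setAverage ht₀ ht hft
  exact hfx.trans ((hf (hst x hx y hy)).trans hfy)

theorem additive_model_negative_association_general
    (μ : Measure ℝ) [IsProbabilityMeasure μ]
    (u : ℝ) (hIic0 : 0 < μ (Set.Iic u)) (hIic1 : μ (Set.Iic u) < 1)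
    (γ : ℝ → ℝ) (hγMono : Monotone γ) (hγInt : Integrable γ μ)
    (β0 β1 : ℝ) (hβ : β0 ≤ β1)
    (p11 p10 p01 p00 : ℝ)
    (hp11 : p11 = β1 + (∫ x in Set.Ioi u, γ x ∂μ) / (μ (Set.Ioi u)).toReal)
    (hp10 : p10 = β0 + (∫ x in Set.Ioi u, γ x ∂μ) / (μ (Set.Ioi u)).toReal)
    (hp01 : p01 = β1 + (∫ x in Set.Iic u, γ x ∂μ) / (μ (Set.Iic u)).toReal)
    (hp00 : p00 = β0 + (∫ x in Set.Iic u, γ x ∂μ) / (μ (Set.Iic u)).toReal) :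
    p11 * p00 ≤ p10 * p01 ∧ (1 - p11) * (1 - p00) ≤ (1 - p10) * (1 - p01) := by
  have hIoi0 : μ (Ioi u) ≠ 0 := by
    rw [← compl_Iic, Ne, prob_compl_eq_zero_iff measurableSet_Iic]
    exact hIic1.ne
  have hmean : ⨍ x in Iic u, γ x ∂μ ≤ ⨍ x in Ioi u, γ x ∂μ :=
    hγMono.setAverage_le_setAverage (fun _ hx _ hy ↦ hx.trans (le_of_lt hy)) hIic0.ne'
      (measure_ne_top _ _) hIoi0 (measure_ne_top _ _) hγInt.integrableOn hγInt.integrableOn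
  simp only [setAverage_eq, measureReal_def, smul_eq_mul, inv_mul_eq_div] at hmean
  subst hp11 hp10 hp01 hp00
  refine ⟨add_mul_add_le_add_mul_add hβ hmean, ?_⟩
  linear_combination add_mul_add_le_add_mul_add (sub_le_sub_left hβ 1) (neg_le_neg hmean)

/-- Core inequality in Lemma S6: the additive treatment model induces negative
conditional association between the instrument and the confounder given the
treatment. -/
theorem additive_model_negative_association
    (μ : Measure ℝ) [IsProbabilityMeasure μ]
    (u : ℝ) (hIic0 : 0 < μ (Set.Iic u)) (hIic1 : μ (Set.Iic u) < 1)
    (γ : ℝ → ℝ) (hγMeas : Measurable γ) (hγMono : Monotone γ) (hγInt : Integrable γ μ)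
    (β0 β1 : ℝ) (hβ : β0 ≤ β1)
    (hBound : ∀ᵐ u' ∂μ, 0 < β0 + γ u' ∧ β1 + γ u' < 1)
    (p11 p10 p01 p00 : ℝ)
    (hp11 : p11 = β1 + (∫ x in Set.Ioi u, γ x ∂μ) / (μ (Set.Ioi u)).toReal)
    (hp10 : p10 = β0 + (∫ x in Set.Ioi u, γ x ∂μ) / (μ (Set.Ioi u)).toReal)
    (hp01 : p01 = β1 + (∫ x in Set.Iic u, γ x ∂μ) / (μ (Set.Iic u)).toReal)
    (hp00 : p00 = β0 + (∫ x in Set.Iic u, γ x ∂μ) / (μ (Set.Iic u)).toReal) :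
    p11 * p00 ≤ p10 * p01 ∧ (1 - p11) * (1 - p00) ≤ (1 - p10) * (1 - p01) :=
  additive_model_negative_association_general μ u hIic0 hIic1 γ hγMono hγInt β0 β1 hβ p11 p10 p01
    p00 hp11 hp10 hp01 hp00
end

section
/- Lemma S8 (covariance representation of the difference between adjusted and unadjusted estimators). Let 𝒢 ⊆ 𝓕 be a sub-σ-algebra (e.g. the σ-algebra generated by the instrument Z), let Π := E[1_{A=1} | 𝒢], and for a = 0,1 let μ_a be a 𝒢-measurable integrable random variable with μ_a·E[1_{A=a} | 𝒢] = E[Y·1_{A=a} | 𝒢] almost surely and Π·μ_a integrable. Then, with cov(X, W) := E[X·W] − E[X]·E[W]: (i) (E(Y | A=1) − E(μ_0 | A=1)) − ACE_unadj = − cov(Π, μ_0)/(f·(1−f)); (ii) (E(μ_1 | A=0) − E(Y | A=0)) − ACE_unadj = − cov(Π, μ_1)/(f·(1−f)); (iii) (E[μ_1] − E[μ_0]) − ACE_unadj = − cov(Π, μ_0)/(1−f) − cov(Π, μ_1)/f. -/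
open MeasureTheory ProbabilityTheory Set

/-! Write `s = {A = 1}`. Pulling the `𝒢`-measurable `μ` out of `E[μ·1_s | 𝒢]` gives
`E[Π·μ] = E[μ·1_s]`, and the defining identity of `μ_a` gives `E[Y·1_{A=a}] = E[μ_a·1_{A=a}]`.
Since `{A = 0} = sᶜ`, every conditional mean in the statement is thereby expressed through
`E[μ_a]`, `E[Π·μ_a]` and `E[Π] = f`, and the three identities are algebra. -/

theorem Set.mul_indicator_one_eq_indicator {Ω : Type*} (s : Set Ω) (g : Ω → ℝ) :
    (fun ω => g ω * s.indicator (fun _ => (1 : ℝ)) ω) = s.indicator g := by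
  ext ω; by_cases hω : ω ∈ s <;> simp [hω]

section

variable {Ω : Type*} {m m0 : MeasurableSpace Ω} {P : Measure Ω} [IsFiniteMeasure P] {s : Set Ω}

theorem integral_condExp_indicator_mul (hm : m ≤ m0) (hs : MeasurableSet[m0] s) {g : Ω → ℝ}
    (hg : StronglyMeasurable[m] g) (hgi : Integrable g P) :
    ∫ ω, P[s.indicator (fun _ => (1 : ℝ)) | m] ω * g ω ∂P = ∫ ω in s, g ω ∂P := by
  have hgs : g * s.indicator (fun _ => (1 : ℝ)) = s.indicator g := s.mul_indicator_one_eq_indicator g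
  have hpull := condExp_mul_of_stronglyMeasurable_left hg (hgs ▸ hgi.indicator hs)
    ((integrable_const (1 : ℝ)).indicator hs)
  calc ∫ ω, P[s.indicator (fun _ => (1 : ℝ)) | m] ω * g ω ∂P
      = ∫ ω, P[g * s.indicator (fun _ => (1 : ℝ)) | m] ω ∂P :=
        integral_congr_ae (hpull.mono fun ω h => by rw [h, Pi.mul_apply, mul_comm])
    _ = ∫ ω in s, g ω ∂P := by rw [integral_condExp hm, hgs, integral_indicator hs]

theorem setIntegral_eq_of_mul_condExp_indicator_ae_eq (hm : m ≤ m0) (hs : MeasurableSet[m0] s)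
    {g Y : Ω → ℝ} (hg : StronglyMeasurable[m] g) (hgi : Integrable g P)
    (h : ∀ᵐ ω ∂P, g ω * P[s.indicator (fun _ => (1 : ℝ)) | m] ω
      = P[fun ω => Y ω * s.indicator (fun _ => (1 : ℝ)) ω | m] ω) :
    ∫ ω in s, Y ω ∂P = ∫ ω in s, g ω ∂P := by
  calc ∫ ω in s, Y ω ∂P
      = ∫ ω, P[fun ω => Y ω * s.indicator (fun _ => (1 : ℝ)) ω | m] ω ∂P := by
        rw [integral_condExp hm, s.mul_indicator_one_eq_indicator, integral_indicator hs]
    _ = ∫ ω, P[s.indicator (fun _ => (1 : ℝ)) | m] ω * g ω ∂P :=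
        integral_congr_ae (h.mono fun ω h => by rw [← h, mul_comm])
    _ = ∫ ω in s, g ω ∂P := integral_condExp_indicator_mul hm hs hg hgi

end

theorem adjusted_minus_unadjusted_covariance_general
    {Ω : Type*} [m0 : MeasurableSpace Ω] (P : Measure Ω) [IsProbabilityMeasure P]
    (A Y : Ω → ℝ)
    (hAmeas : Measurable A) (hAbin : ∀ ω, A ω = 0 ∨ A ω = 1)
    (f : ℝ) (hf : f = (P {ω | A ω = 1}).toReal) (hf0 : 0 < f) (hf1 : f < 1)
    (𝓖 : MeasurableSpace Ω) (h𝓖 : 𝓖 ≤ m0)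
    (Pi : Ω → ℝ) (hPi : Pi = P[indic A 1 | 𝓖])
    (μ1 μ0 : Ω → ℝ)
    (hμ1Meas : Measurable[𝓖] μ1) (hμ0Meas : Measurable[𝓖] μ0)
    (hμ1Int : Integrable μ1 P) (hμ0Int : Integrable μ0 P)
    (hμ1Ver : ∀ᵐ ω ∂P, μ1 ω * (P[indic A 1 | 𝓖]) ω = (P[fun ω' => Y ω' * indic A 1 ω' | 𝓖]) ω)
    (hμ0Ver : ∀ᵐ ω ∂P, μ0 ω * (P[indic A 0 | 𝓖]) ω = (P[fun ω' => Y ω' * indic A 0 ω' | 𝓖]) ω) :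
    -- (i)
    ((@cE Ω m0 P Y {ω | A ω = 1} - @cE Ω m0 P μ0 {ω | A ω = 1})
        - (@cE Ω m0 P Y {ω | A ω = 1} - @cE Ω m0 P Y {ω | A ω = 0})
      = -(((∫ ω, Pi ω * μ0 ω ∂P) - (∫ ω, Pi ω ∂P) * (∫ ω, μ0 ω ∂P)) / (f * (1 - f)))) ∧
    -- (ii)
    ((@cE Ω m0 P μ1 {ω | A ω = 0} - @cE Ω m0 P Y {ω | A ω = 0})
        - (@cE Ω m0 P Y {ω | A ω = 1} - @cE Ω m0 P Y {ω | A ω = 0})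
      = -(((∫ ω, Pi ω * μ1 ω ∂P) - (∫ ω, Pi ω ∂P) * (∫ ω, μ1 ω ∂P)) / (f * (1 - f)))) ∧
    -- (iii)
    (((∫ ω, μ1 ω ∂P) - (∫ ω, μ0 ω ∂P))
        - (@cE Ω m0 P Y {ω | A ω = 1} - @cE Ω m0 P Y {ω | A ω = 0})
      = -(((∫ ω, Pi ω * μ0 ω ∂P) - (∫ ω, Pi ω ∂P) * (∫ ω, μ0 ω ∂P)) / (1 - f))
        - ((∫ ω, Pi ω * μ1 ω ∂P) - (∫ ω, Pi ω ∂P) * (∫ ω, μ1 ω ∂P)) / f) := by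
  simp only [indic] at hμ0Ver hμ1Ver hPi
  set s := {ω | A ω = 1}
  have hs : MeasurableSet[m0] s := hAmeas (measurableSet_singleton 1)
  have hcompl : {ω | A ω = 0} = sᶜ := by
    ext ω; rcases hAbin ω with h | h <;> simp [s, h]
  rw [hcompl] at hμ0Ver
  have hPs : (P s).toReal = f := hf.symm
  have hPsc : (P sᶜ).toReal = 1 - f := by
    rw [← measureReal_def, probReal_compl_eq_one_sub hs, measureReal_def, hPs]
  have hEPi : ∫ ω, Pi ω ∂P = f := by
    rw [hPi, integral_condExp h𝓖, integral_indicator_const _ hs, smul_eq_mul, mul_one,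
      measureReal_def, hPs]
  have hEPiμ0 : ∫ ω, Pi ω * μ0 ω ∂P = ∫ ω in s, μ0 ω ∂P :=
    hPi ▸ integral_condExp_indicator_mul h𝓖 hs hμ0Meas.stronglyMeasurable hμ0Int
  have hEPiμ1 : ∫ ω, Pi ω * μ1 ω ∂P = ∫ ω in s, μ1 ω ∂P :=
    hPi ▸ integral_condExp_indicator_mul h𝓖 hs hμ1Meas.stronglyMeasurable hμ1Int
  have hY1 : ∫ ω in s, Y ω ∂P = ∫ ω in s, μ1 ω ∂P :=
    setIntegral_eq_of_mul_condExp_indicator_ae_eq h𝓖 hs hμ1Meas.stronglyMeasurable hμ1Int hμ1Ver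
  have hY0 : ∫ ω in sᶜ, Y ω ∂P = ∫ ω in sᶜ, μ0 ω ∂P :=
    setIntegral_eq_of_mul_condExp_indicator_ae_eq h𝓖 hs.compl hμ0Meas.stronglyMeasurable
      hμ0Int hμ0Ver
  simp only [cE, hcompl, hPs, hPsc, hEPi, hEPiμ0, hEPiμ1, hY1, hY0,
    setIntegral_compl hs hμ0Int, setIntegral_compl hs hμ1Int]
  have hf_ne : f ≠ 0 := hf0.ne'
  have h1f_ne : 1 - f ≠ 0 := by linarith
  refine ⟨?_, ?_, ?_⟩ <;> field_simp <;> ring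

/-- Lemma S8: covariance representation of the difference between the adjusted
and unadjusted estimators. -/
theorem adjusted_minus_unadjusted_covariance
    {Ω : Type*} [m0 : MeasurableSpace Ω] (P : Measure Ω) [IsProbabilityMeasure P]
    (A Y : Ω → ℝ)
    (hAmeas : Measurable A) (hAbin : ∀ ω, A ω = 0 ∨ A ω = 1)
    (hYint : Integrable Y P)
    (f : ℝ) (hf : f = (P {ω | A ω = 1}).toReal) (hf0 : 0 < f) (hf1 : f < 1)
    (𝓖 : MeasurableSpace Ω) (h𝓖 : 𝓖 ≤ m0)
    (Pi : Ω → ℝ) (hPi : Pi = P[indic A 1 | 𝓖])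
    (μ1 μ0 : Ω → ℝ)
    (hμ1Meas : Measurable[𝓖] μ1) (hμ0Meas : Measurable[𝓖] μ0)
    (hμ1Int : Integrable μ1 P) (hμ0Int : Integrable μ0 P)
    (hμ1Ver : ∀ᵐ ω ∂P, μ1 ω * (P[indic A 1 | 𝓖]) ω = (P[fun ω' => Y ω' * indic A 1 ω' | 𝓖]) ω)
    (hμ0Ver : ∀ᵐ ω ∂P, μ0 ω * (P[indic A 0 | 𝓖]) ω = (P[fun ω' => Y ω' * indic A 0 ω' | 𝓖]) ω)
    (hPiμ1Int : Integrable (fun ω => Pi ω * μ1 ω) P)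
    (hPiμ0Int : Integrable (fun ω => Pi ω * μ0 ω) P) :
    -- (i)
    ((@cE Ω m0 P Y {ω | A ω = 1} - @cE Ω m0 P μ0 {ω | A ω = 1})
        - (@cE Ω m0 P Y {ω | A ω = 1} - @cE Ω m0 P Y {ω | A ω = 0})
      = -(((∫ ω, Pi ω * μ0 ω ∂P) - (∫ ω, Pi ω ∂P) * (∫ ω, μ0 ω ∂P)) / (f * (1 - f)))) ∧
    -- (ii)
    ((@cE Ω m0 P μ1 {ω | A ω = 0} - @cE Ω m0 P Y {ω | A ω = 0})
        - (@cE Ω m0 P Y {ω | A ω = 1} - @cE Ω m0 P Y {ω | A ω = 0})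
      = -(((∫ ω, Pi ω * μ1 ω ∂P) - (∫ ω, Pi ω ∂P) * (∫ ω, μ1 ω ∂P)) / (f * (1 - f)))) ∧
    -- (iii)
    (((∫ ω, μ1 ω ∂P) - (∫ ω, μ0 ω ∂P))
        - (@cE Ω m0 P Y {ω | A ω = 1} - @cE Ω m0 P Y {ω | A ω = 0})
      = -(((∫ ω, Pi ω * μ0 ω ∂P) - (∫ ω, Pi ω ∂P) * (∫ ω, μ0 ω ∂P)) / (1 - f))
        - ((∫ ω, Pi ω * μ1 ω ∂P) - (∫ ω, Pi ω ∂P) * (∫ ω, μ1 ω ∂P)) / f) :=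
  adjusted_minus_unadjusted_covariance_general (m0 := m0) P A Y hAmeas hAbin f hf hf0 hf1 𝓖 h𝓖 Pi
    hPi μ1 μ0 hμ1Meas hμ0Meas hμ1Int hμ0Int hμ1Ver hμ0Ver
end
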